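/- arXiv:1509.03871 — 6 statements merged into one kernel-verified Lean document; each statement's English description precedes it below -/
import Mathlib

section
/- For every real number α with 0 < α ≤ 1/2 there exists N such that for all n ≥ N the following holds: if a 2-dimensional simplicial complex on n vertices has at least n^{2+α} faces, then it contains a nontrivial Z/2 2-cycle with at most 4·n^{2−2α} faces. (Equivalently, g₂(n,m) ≤ 4 n^{2−2α} whenever m ≥ n^{2+α}.) -/
/-- A `Z/2` 2-cycle: a finite set `Z` of 3-element subsets of the vertex type `V`
such that every 2-element subset of `V` is contained in an even number of members of `Z`. -/
def IsTwoCycle {V : Type} [DecidableEq V] (Z : Finset (Finset V)) : Prop :=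
  (∀ t ∈ Z, t.card = 3) ∧
  ∀ e : Finset V, e.card = 2 → Even ((Z.filter (fun t => e ⊆ t)).card)

/-!
Put `p = n^(1-α)` and `s = ⌈2p⌉`. A random `s`-element vertex set spans on average
`m · C(s,3) / C(n,3) ≥ 2 (s - 2) / p · C(s,2) > C(s,2)` faces (as `m ≥ n^(2+α) = n³ / p` and
`6 C(n,3) ≤ n³`), so some `S` spans more than `C(s,2)` faces. The boundaries of `C(s,2) + 1` of
them lie in the `C(s,2)`-dimensional `𝔽₂`-space on the edges of `S`, so a nonempty subfamily has
zero boundary, i.e. is a 2-cycle, and it has at most `C(s,2) + 1 ≤ 4p² = 4 n^(2-2α)` faces.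
-/

open Finset

section TwoCycle

variable {V : Type} [DecidableEq V]

lemma isTwoCycle_map_support {F : Finset (Finset V)} (h3 : ∀ t ∈ F, #t = 3) (g : F → ZMod 2)
    (hg : ∀ e : Finset V, #e = 2 → ∑ t, g t * (if e ⊆ t then 1 else 0) = 0) :
    IsTwoCycle ((univ.filter (g · ≠ 0)).map (Function.Embedding.subtype _)) := by
  refine ⟨fun t ht => ?_, fun e he => ?_⟩
  · obtain ⟨i, -, rfl⟩ := mem_map.mp ht
    exact h3 _ i.2
  have hcard : (#(((univ.filter (g · ≠ 0)).map (Function.Embedding.subtype _)).filter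
      (e ⊆ ·)) : ZMod 2) = ∑ t, g t * (if e ⊆ t then 1 else 0) := by
    rw [filter_map, card_map, filter_filter, card_filter, Nat.cast_sum]
    refine sum_congr rfl fun t _ => ?_
    obtain h | h : g t = 0 ∨ g t = 1 := by generalize g t = a; decide +revert
    all_goals simp [h]
  rw [← ZMod.natCast_eq_zero_iff_even, hcard, hg e he]

theorem exists_isTwoCycle_of_choose_two_lt (S : Finset V) {F : Finset (Finset V)}
    (h3 : ∀ t ∈ F, #t = 3) (hS : ∀ t ∈ F, t ⊆ S) (hF : (#S).choose 2 < #F) :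
    ∃ Z ⊆ F, Z.Nonempty ∧ IsTwoCycle Z := by
  let boundary : F → S.powersetCard 2 → ZMod 2 := fun t e =>
    if (e : Finset V) ⊆ t then 1 else 0
  have hdep : ¬ LinearIndependent (ZMod 2) boundary := fun h => by
    have := h.fintype_card_le_finrank
    simp only [Module.finrank_fintype_fun_eq_card, Fintype.card_coe, card_powersetCard] at this
    omega
  obtain ⟨g, hg, t₀, ht₀⟩ := Fintype.not_linearIndependent_iff.mp hdep
  refine ⟨_, fun t ht => ?_, ⟨t₀, mem_map_of_mem _ (by simpa using ht₀)⟩,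
    isTwoCycle_map_support h3 g fun e he => ?_⟩
  · obtain ⟨i, -, rfl⟩ := mem_map.mp ht
    exact i.2
  by_cases heS : e ⊆ S
  · simpa [boundary] using congrFun hg ⟨e, mem_powersetCard.mpr ⟨heS, he⟩⟩
  · refine sum_eq_zero fun t _ => ?_
    have het : ¬ e ⊆ t := fun h => heS (h.trans (hS t t.2))
    simp [het]

theorem exists_isTwoCycle_card_le_of_choose_two_lt (S : Finset V) {F : Finset (Finset V)}
    (h3 : ∀ t ∈ F, #t = 3) (hS : ∀ t ∈ F, t ⊆ S) (hF : (#S).choose 2 < #F) :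
    ∃ Z ⊆ F, Z.Nonempty ∧ IsTwoCycle Z ∧ #Z ≤ (#S).choose 2 + 1 := by
  obtain ⟨F', hF'F, hF'⟩ := exists_subset_card_eq (Nat.succ_le_of_lt hF)
  obtain ⟨Z, hZF', hZ, hZc⟩ := exists_isTwoCycle_of_choose_two_lt S
    (fun t ht => h3 t (hF'F ht)) (fun t ht => hS t (hF'F ht)) (by omega)
  exact ⟨Z, hZF'.trans hF'F, hZ, hZc, (card_le_card hZF').trans hF'.le⟩

end TwoCycle

section Averaging

variable {α : Type*} [Fintype α] [DecidableEq α]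

theorem exists_lt_card_filter_subset_of_mul_lt {F : Finset (Finset α)} {k s c : ℕ}
    (hF : ∀ t ∈ F, #t = k) (hks : k ≤ s)
    (h : c * (Fintype.card α).choose s < #F * (Fintype.card α - k).choose (s - k)) :
    ∃ S : Finset α, #S = s ∧ c < #(F.filter (· ⊆ S)) := by
  have hcount : ∑ S ∈ powersetCard s univ, #(F.filter (· ⊆ S))
      = #F * (Fintype.card α - k).choose (s - k) := by
    calc ∑ S ∈ powersetCard s univ, #(F.filter (· ⊆ S))
        = ∑ t ∈ F, #((powersetCard s univ).filter (t ⊆ ·)) := by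
          simp only [card_filter]
          exact sum_comm
      _ = #F * (Fintype.card α - k).choose (s - k) := by
          rw [sum_const_nat fun t ht => ?_]
          rw [card_filter_powersetCard_subset t univ s (subset_univ t) (hF t ht ▸ hks),
            card_univ, hF t ht]
  obtain ⟨S, hS, hcS⟩ := exists_lt_of_sum_lt (s := powersetCard s univ) (f := fun _ => c)
    (by rwa [hcount, sum_const, card_powersetCard, card_univ, smul_eq_mul, mul_comm])
  exact ⟨S, (mem_powersetCard.mp hS).2, hcS⟩

end Averaging

lemma choose_two_mul_choose_lt_of_pow_three_lt {n m s : ℕ} (hs : 3 ≤ s) (hsn : s ≤ n)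
    (h : (n : ℝ) ^ 3 < 2 * m * (s - 2)) :
    s.choose 2 * n.choose s < m * (n - 3).choose (s - 3) := by
  have h₁ : 3 * n.choose 3 < m * (s - 2) := by
    have hn3 : (n.choose 3 : ℝ) ≤ n ^ 3 / 6 := by
      simpa [Nat.factorial] using Nat.choose_le_pow_div (α := ℝ) 3 n
    have : ((3 * n.choose 3 : ℕ) : ℝ) < (m * (s - 2) : ℕ) := by
      push_cast [Nat.cast_sub (by omega : 2 ≤ s)]
      linarith
    exact_mod_cast this
  have h₂ : s.choose 2 * n.choose 3 < m * s.choose 3 := by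
    refine Nat.lt_of_mul_lt_mul_right (a := 3) ?_
    calc s.choose 2 * n.choose 3 * 3 = s.choose 2 * (3 * n.choose 3) := by ring
      _ < s.choose 2 * (m * (s - 2)) := Nat.mul_lt_mul_of_pos_left h₁ (Nat.choose_pos (by omega))
      _ = m * (s.choose 3 * 3) := by rw [Nat.choose_succ_right_eq s 2]; ring
      _ = m * s.choose 3 * 3 := by ring
  refine Nat.lt_of_mul_lt_mul_right (a := s.choose 3) ?_
  calc s.choose 2 * n.choose s * s.choose 3
        = s.choose 2 * n.choose 3 * (n - 3).choose (s - 3) := by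
        rw [mul_assoc, Nat.choose_mul hs]; ring
    _ < m * s.choose 3 * (n - 3).choose (s - 3) :=
        Nat.mul_lt_mul_of_pos_right h₂ (Nat.choose_pos (by omega))
    _ = m * (n - 3).choose (s - 3) * s.choose 3 := by ring

theorem exists_isTwoCycle_card_le_choose_two {α : Type} [Fintype α] [DecidableEq α]
    {F : Finset (Finset α)} (h3 : ∀ t ∈ F, #t = 3) {s : ℕ} (hs : 3 ≤ s)
    (hsn : s ≤ Fintype.card α)
    (hF : (Fintype.card α : ℝ) ^ 3 < 2 * #F * (s - 2)) :
    ∃ Z ⊆ F, Z.Nonempty ∧ IsTwoCycle Z ∧ #Z ≤ s.choose 2 + 1 := by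
  obtain ⟨S, hS, hSF⟩ := exists_lt_card_filter_subset_of_mul_lt h3 hs
    (choose_two_mul_choose_lt_of_pow_three_lt hs hsn hF)
  obtain ⟨Z, hZF, hZ⟩ := exists_isTwoCycle_card_le_of_choose_two_lt S
    (fun t ht => h3 t (mem_filter.mp ht).1) (fun t ht => (mem_filter.mp ht).2) (hS ▸ hSF)
  exact ⟨Z, hZF.trans (filter_subset _ F), hS ▸ hZ⟩

section RealEstimates

variable {x α : ℝ}

lemma two_le_rpow_one_sub (hα : α ≤ 1 / 2) (hx : 4 ≤ x) : 2 ≤ x ^ (1 - α) :=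
  calc (2 : ℝ) = 4 ^ (1 / 2 : ℝ) := by
        rw [show (4 : ℝ) = 2 ^ (2 : ℝ) by norm_num, ← Real.rpow_mul (by norm_num)]; norm_num
    _ ≤ x ^ (1 / 2 : ℝ) := Real.rpow_le_rpow (by norm_num) hx (by norm_num)
    _ ≤ x ^ (1 - α) := Real.rpow_le_rpow_of_exponent_le (by linarith) (by linarith)

lemma three_mul_rpow_one_sub_le (hα : 0 < α) (hx : 3 ^ (1 / α) ≤ x) : 3 * x ^ (1 - α) ≤ x := by
  have hx0 : 0 < x := lt_of_lt_of_le (by positivity) hx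
  have h3 : 3 ≤ x ^ α := by
    calc (3 : ℝ) = (3 ^ (1 / α)) ^ α := by
          rw [← Real.rpow_mul (by norm_num), one_div_mul_cancel hα.ne', Real.rpow_one]
      _ ≤ x ^ α := Real.rpow_le_rpow (by positivity) hx hα.le
  calc 3 * x ^ (1 - α) ≤ x ^ α * x ^ (1 - α) := by gcongr
    _ = x := by rw [← Real.rpow_add hx0]; norm_num

lemma pow_three_lt_two_mul_mul (hx : 0 < x) (hp : 2 ≤ x ^ (1 - α)) {m s : ℝ}
    (hm : x ^ (2 + α) ≤ m) (hs : 2 * x ^ (1 - α) ≤ s) : x ^ 3 < 2 * m * (s - 2) := by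
  have hq : 0 < x ^ (2 + α) := Real.rpow_pos_of_pos hx _
  have hqp : x ^ (2 + α) * x ^ (1 - α) = x ^ 3 := by
    rw [← Real.rpow_add hx, ← Real.rpow_natCast]; norm_num
  nlinarith

lemma choose_two_add_one_le {s : ℕ} {p : ℝ} (hp : 2 ≤ p) (hs : (s : ℝ) < 2 * p + 1) :
    (s.choose 2 : ℝ) + 1 ≤ 4 * p ^ 2 := by
  rw [Nat.cast_choose_two]
  nlinarith [(Nat.cast_nonneg s : (0 : ℝ) ≤ s)]

end RealEstimates

/-- **Theorem (2-girth upper bound, `0 < α ≤ 1/2`).**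
For every real `α` with `0 < α ≤ 1/2` there exists `N` such that for all `n ≥ N`:
any 2-dimensional simplicial complex on `n` vertices (given by its set `F` of
3-element faces) with at least `n^(2+α)` faces contains a nontrivial `Z/2` 2-cycle
with at most `4 * n^(2-2α)` faces. -/
theorem two_girth_upper_bound (α : ℝ) (hα0 : 0 < α) (hα : α ≤ 1 / 2) :
    ∃ N : ℕ, ∀ n : ℕ, N ≤ n → ∀ F : Finset (Finset (Fin n)),
      (∀ t ∈ F, t.card = 3) → ((n : ℝ) ^ ((2 : ℝ) + α) ≤ F.card) →
      ∃ Z ⊆ F, Z.Nonempty ∧ IsTwoCycle Z ∧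
        (Z.card : ℝ) ≤ 4 * (n : ℝ) ^ ((2 : ℝ) - 2 * α) := by
  refine ⟨max 4 ⌈(3 : ℝ) ^ (1 / α)⌉₊, fun n hn F h3 hF => ?_⟩
  rw [max_le_iff, Nat.ceil_le] at hn
  have hn4 : (4 : ℝ) ≤ n := by exact_mod_cast hn.1
  set p := (n : ℝ) ^ (1 - α)
  have hp := two_le_rpow_one_sub hα hn4
  have hpn := three_mul_rpow_one_sub_le hα0 hn.2
  set s := ⌈2 * p⌉₊
  have hs : 2 * p ≤ s ∧ (s : ℝ) < 2 * p + 1 :=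
    ⟨Nat.le_ceil _, Nat.ceil_lt_add_one (by positivity)⟩
  obtain ⟨Z, hZF, hZ, hZc, hZs⟩ := exists_isTwoCycle_card_le_choose_two h3 (s := s)
    (by exact_mod_cast (by linarith : (3 : ℝ) ≤ s))
    (by rw [Fintype.card_fin]; exact_mod_cast (by linarith : (s : ℝ) ≤ n))
    (by rw [Fintype.card_fin]; exact pow_three_lt_two_mul_mul (by positivity) hp hF hs.1)
  refine ⟨Z, hZF, hZ, hZc, ?_⟩
  calc (#Z : ℝ) ≤ s.choose 2 + 1 := by exact_mod_cast hZs
    _ ≤ 4 * p ^ 2 := choose_two_add_one_le hp hs.2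
    _ = 4 * (n : ℝ) ^ ((2 : ℝ) - 2 * α) := by
        rw [← Real.rpow_natCast, ← Real.rpow_mul (by positivity)]; ring_nf
end

section
/- Let Z be an inclusion-minimal Z/2 2-cycle with exactly f members, and let v be the number of vertices covered by the members of Z. Then √(2f) ≤ v ≤ f/2 + 2. In particular Z(f,v) = 0 unless √(2f) ≤ v ≤ f/2 + 2. -/
/-- An inclusion-minimal (nontrivial) `Z/2` 2-cycle: a nonempty 2-cycle no nonempty
proper subset of which is a 2-cycle. -/
def IsMinCycle {V : Type} [DecidableEq V] (Z : Finset (Finset V)) : Prop :=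
  IsTwoCycle Z ∧ Z.Nonempty ∧ ∀ Z' ⊂ Z, Z'.Nonempty → ¬ IsTwoCycle Z'

open Finset Matrix

lemma Matrix.card_le_rank_add_one {m n K : Type*} [Fintype n] [Field K] {A : Matrix m n K}
    {c : n → K} (h : LinearMap.ker A.mulVecLin ≤ K ∙ c) : Fintype.card n ≤ A.rank + 1 := by
  have hker : Module.finrank K (LinearMap.ker A.mulVecLin) ≤ 1 :=
    (Submodule.finrank_mono h).trans <| (finrank_span_le_card {c}).trans (by simp)
  have := LinearMap.finrank_range_add_finrank_ker A.mulVecLin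
  rw [Module.finrank_fintype_fun_eq_card] at this
  rw [Matrix.rank]
  omega

namespace TwoCycle

section Support

variable {V : Type} {Z : Finset (Finset V)}

def chainSupport (x : Z → ZMod 2) : Finset (Finset V) :=
  ({t | x t = 1} : Finset Z).map (Function.Embedding.subtype _)

lemma coe_mem_chainSupport {x : Z → ZMod 2} {t : Z} :
    (t : Finset V) ∈ chainSupport x ↔ x t = 1 := by
  simp [chainSupport]

lemma chainSupport_subset (x : Z → ZMod 2) : chainSupport x ⊆ Z := by
  intro t ht
  obtain ⟨t, -, rfl⟩ := mem_map.1 ht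
  exact t.2

end Support

variable {V : Type} [DecidableEq V]

section

variable (Z : Finset (Finset V))

def edges : Finset (Finset V) := Z.biUnion (·.powersetCard 2)

def vertices : Finset V := Z.biUnion id

def boundary₂ : Matrix (edges Z) Z (ZMod 2) :=
  of fun d t => if (d : Finset V) ⊆ t then 1 else 0

def boundary₁ : Matrix (vertices Z) (edges Z) (ZMod 2) :=
  of fun u d => if (u : V) ∈ (d : Finset V) then 1 else 0

end

variable {Z : Finset (Finset V)}

lemma mem_edges {d : Finset V} : d ∈ edges Z ↔ ∃ t ∈ Z, d ⊆ t ∧ #d = 2 := by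
  simp [edges]

lemma mem_vertices {a : V} : a ∈ vertices Z ↔ ∃ t ∈ Z, a ∈ t := by
  simp [vertices]

lemma filter_subset_edges {t : Finset V} (ht : t ∈ Z) :
    {d ∈ edges Z | d ⊆ t} = t.powersetCard 2 := by
  ext d
  simp only [mem_filter, mem_edges, mem_powersetCard]
  exact ⟨fun ⟨⟨_, _, _, hd⟩, hdt⟩ => ⟨hdt, hd⟩, fun ⟨hdt, hd⟩ => ⟨⟨t, ht, hdt, hd⟩, hdt⟩⟩

lemma edges_subset_powersetCard_vertices : edges Z ⊆ (vertices Z).powersetCard 2 := by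
  intro d hd
  obtain ⟨t, ht, hdt, hd⟩ := mem_edges.1 hd
  exact mem_powersetCard.2 ⟨fun a ha => mem_vertices.2 ⟨t, ht, hdt ha⟩, hd⟩

lemma card_edges_le_choose : #(edges Z) ≤ (#(vertices Z)).choose 2 := by
  simpa using card_le_card (edges_subset_powersetCard_vertices (Z := Z))

lemma boundary₁_mul_boundary₂ (h3 : ∀ t ∈ Z, #t = 3) : boundary₁ Z * boundary₂ Z = 0 := by
  ext u t
  have hcount : (boundary₁ Z * boundary₂ Z) u t =
      #{d ∈ (t : Finset V).powersetCard 2 | {(u : V)} ⊆ d} := by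
    simp only [mul_apply, boundary₁, boundary₂, of_apply, ite_zero_mul_ite_zero, mul_one]
    rw [sum_coe_sort (edges Z) (fun d => if (u : V) ∈ d ∧ d ⊆ t then (1 : ZMod 2) else 0),
      sum_boole, ← filter_subset_edges t.2, filter_filter]
    simp only [singleton_subset_iff, and_comm]
  rw [hcount, Matrix.zero_apply, ZMod.natCast_eq_zero_iff_even]
  by_cases hut : (u : V) ∈ (t : Finset V)
  · rw [card_filter_powersetCard_subset _ _ _ (singleton_subset_iff.2 hut) (by simp), h3 t t.2]
    simp
  · rw [card_eq_zero.2 <| filter_eq_empty_iff.2 fun d hd hud =>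
      hut ((mem_powersetCard.1 hd).1 (singleton_subset_iff.1 hud))]
    exact Even.zero

lemma boundary₂_mulVec_apply (x : Z → ZMod 2) (d : edges Z) :
    (boundary₂ Z *ᵥ x) d = #{t ∈ chainSupport x | (d : Finset V) ⊆ t} := by
  have hbit : ∀ a : ZMod 2, a = if a = 1 then 1 else 0 := by decide
  simp only [mulVec, dotProduct, boundary₂, of_apply]
  rw [sum_congr rfl fun t _ => by rw [hbit (x t), ite_zero_mul_ite_zero, mul_one],
    sum_boole, chainSupport, filter_map, card_map, filter_filter]
  simp only [Function.comp_apply, Function.Embedding.coe_subtype, and_comm]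

lemma boundary₁_transpose_mulVec_apply_pair (g : vertices Z → ZMod 2) {a b : vertices Z}
    (hab : a ≠ b) (hd : {(a : V), (b : V)} ∈ edges Z) :
    ((boundary₁ Z)ᵀ *ᵥ g) ⟨{(a : V), (b : V)}, hd⟩ = g a + g b := by
  simp only [mulVec, dotProduct, transpose_apply, boundary₁, of_apply, ite_mul, one_mul, zero_mul]
  rw [← sum_filter]
  have hfilter : univ.filter (fun u : vertices Z => (u : V) ∈ ({(a : V), (b : V)} : Finset V)) =
      {a, b} := by
    ext u
    simp only [mem_filter, mem_univ, true_and, mem_insert, mem_singleton, Subtype.ext_iff]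
  rw [hfilter, sum_pair hab]

lemma eq_of_boundary₁_transpose_mulVec_eq_zero {g : vertices Z → ZMod 2}
    (hg : (boundary₁ Z)ᵀ *ᵥ g = 0) {t : Finset V} (ht : t ∈ Z) {a b : vertices Z}
    (ha : (a : V) ∈ t) (hb : (b : V) ∈ t) : g a = g b := by
  obtain rfl | hab := eq_or_ne a b
  · rfl
  have hd : {(a : V), (b : V)} ∈ edges Z := mem_edges.2
    ⟨t, ht, insert_subset ha (singleton_subset_iff.2 hb), card_pair (Subtype.coe_injective.ne hab)⟩
  have hsum := congrFun hg ⟨_, hd⟩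
  rw [boundary₁_transpose_mulVec_apply_pair g hab hd] at hsum
  exact (by decide : ∀ x y : ZMod 2, x + y = 0 → x = y) _ _ hsum

end TwoCycle

open TwoCycle

variable {V : Type} [DecidableEq V] {Z : Finset (Finset V)}

lemma IsTwoCycle.two_mul_card_edges_le (hZ : IsTwoCycle Z) : 2 * #(edges Z) ≤ 3 * #Z := by
  rw [mul_comm 2, mul_comm 3]
  refine card_mul_le_card_mul (fun d t : Finset V => d ⊆ t) (fun d hd => ?_) (fun t ht => ?_)
  · obtain ⟨t, ht, hdt, hd⟩ := mem_edges.1 hd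
    have hpos : 0 < #{s ∈ Z | d ⊆ s} := card_pos.2 ⟨t, mem_filter.2 ⟨ht, hdt⟩⟩
    obtain ⟨k, hk⟩ := hZ.2 d hd
    rw [bipartiteAbove]
    omega
  · rw [bipartiteBelow, filter_subset_edges ht, card_powersetCard, hZ.1 t ht]
    rfl

lemma IsTwoCycle.filter (hZ : IsTwoCycle Z) (P : Finset V → Prop) [DecidablePred P]
    (hP : ∀ t ∈ Z, ∀ s ∈ Z, ∀ e : Finset V, #e = 2 → e ⊆ t → e ⊆ s → P t → P s) :
    IsTwoCycle {t ∈ Z | P t} := by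
  refine ⟨fun t ht => hZ.1 t (mem_filter.1 ht).1, fun e he => ?_⟩
  by_cases h : ∃ t ∈ Z, e ⊆ t ∧ P t
  · obtain ⟨t, ht, het, hPt⟩ := h
    convert hZ.2 e he using 2
    ext s
    simp only [mem_filter]
    exact ⟨fun ⟨⟨hs, _⟩, hes⟩ => ⟨hs, hes⟩,
      fun ⟨hs, hes⟩ => ⟨⟨hs, hP t ht s hs e he het hes hPt⟩, hes⟩⟩
  · push Not at h
    rw [card_eq_zero.2 <| filter_eq_empty_iff.2 fun s hs hes => h s (mem_filter.1 hs).1 hes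
      (mem_filter.1 hs).2]
    exact Even.zero

lemma IsMinCycle.eq_empty_or_eq (hZ : IsMinCycle Z) {Z' : Finset (Finset V)} (hsub : Z' ⊆ Z)
    (hZ' : IsTwoCycle Z') : Z' = ∅ ∨ Z' = Z := by
  refine Z'.eq_empty_or_nonempty.imp id fun hne => ?_
  by_contra hne'
  exact hZ.2.2 Z' (ssubset_of_subset_of_ne hsub hne') hne hZ'

lemma IsMinCycle.three_le_card_vertices (hZ : IsMinCycle Z) : 3 ≤ #(vertices Z) := by
  obtain ⟨t, ht⟩ := hZ.2.1
  rw [← hZ.1.1 t ht]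
  exact card_le_card fun a ha => mem_vertices.2 ⟨t, ht, ha⟩

lemma IsMinCycle.ker_boundary₂_le (hZ : IsMinCycle Z) :
    LinearMap.ker (boundary₂ Z).mulVecLin ≤ ZMod 2 ∙ 1 := by
  intro x hx
  have hcyc : IsTwoCycle (chainSupport x) := by
    refine ⟨fun t ht => hZ.1.1 t (chainSupport_subset x ht), fun e he => ?_⟩
    by_cases hd : e ∈ edges Z
    · rw [← ZMod.natCast_eq_zero_iff_even, ← boundary₂_mulVec_apply x ⟨e, hd⟩]
      exact congrFun (LinearMap.mem_ker.1 hx) _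
    · rw [card_eq_zero.2 <| filter_eq_empty_iff.2 fun t ht het =>
        hd (mem_edges.2 ⟨t, chainSupport_subset x ht, het, he⟩)]
      exact Even.zero
  rcases hZ.eq_empty_or_eq (chainSupport_subset x) hcyc with h | h
  · have hbit : ∀ a : ZMod 2, a ≠ 1 → a = 0 := by decide
    have : x = 0 := funext fun t =>
      hbit _ fun ht => notMem_empty (t : Finset V) (h ▸ coe_mem_chainSupport.2 ht)
    rw [this]
    exact zero_mem _
  · have : x = 1 := funext fun t => coe_mem_chainSupport.1 (h.symm ▸ t.2)
    rw [this]
    exact Submodule.mem_span_singleton_self _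

lemma IsMinCycle.ker_boundary₁_transpose_le (hZ : IsMinCycle Z) :
    LinearMap.ker (boundary₁ Z)ᵀ.mulVecLin ≤ ZMod 2 ∙ 1 := by
  intro g hg
  replace hg : (boundary₁ Z)ᵀ *ᵥ g = 0 := hg
  let P (t : Finset V) : Prop := ∀ u : vertices Z, (u : V) ∈ t → g u = 0
  have hcyc : IsTwoCycle {t ∈ Z | P t} := by
    refine hZ.1.filter P fun t ht s hs e he het hes hPt u hu => ?_
    obtain ⟨a, ha⟩ := card_pos.1 (he ▸ two_pos : 0 < #e)
    have haV : a ∈ vertices Z := mem_vertices.2 ⟨t, ht, het ha⟩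
    rw [eq_of_boundary₁_transpose_mulVec_eq_zero hg hs hu (b := ⟨a, haV⟩) (hes ha)]
    exact hPt ⟨a, haV⟩ (het ha)
  rcases hZ.eq_empty_or_eq (filter_subset _ _) hcyc with h | h
  · have : g = 1 := funext fun u => by
      obtain ⟨t, ht, hut⟩ := mem_vertices.1 u.2
      have hPt : ¬ P t := fun hPt => notMem_empty t (h ▸ mem_filter.2 ⟨ht, hPt⟩)
      simp only [P, not_forall] at hPt
      obtain ⟨w, hwt, hw⟩ := hPt
      rw [eq_of_boundary₁_transpose_mulVec_eq_zero hg ht hut hwt]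
      exact (by decide : ∀ a : ZMod 2, a ≠ 0 → a = 1) _ hw
    rw [this]
    exact Submodule.mem_span_singleton_self _
  · have : g = 0 := funext fun u => by
      obtain ⟨t, ht, hut⟩ := mem_vertices.1 u.2
      rw [← h] at ht
      exact (mem_filter.1 ht).2 u hut
    rw [this]
    exact zero_mem _

lemma IsMinCycle.card_le_rank_boundary₂_add_one (hZ : IsMinCycle Z) :
    #Z ≤ (boundary₂ Z).rank + 1 := by
  simpa using card_le_rank_add_one hZ.ker_boundary₂_le

lemma IsMinCycle.card_vertices_le_rank_boundary₁_add_one (hZ : IsMinCycle Z) :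
    #(vertices Z) ≤ (boundary₁ Z).rank + 1 := by
  simpa [rank_transpose] using card_le_rank_add_one hZ.ker_boundary₁_transpose_le

theorem IsMinCycle.card_vertices_add_card_le (hZ : IsMinCycle Z) :
    #(vertices Z) + #Z ≤ #(edges Z) + 2 := by
  have hranks := rank_add_rank_le_card_of_mul_eq_zero (boundary₁_mul_boundary₂ hZ.1.1)
  have h₁ := hZ.card_vertices_le_rank_boundary₁_add_one
  have h₂ := hZ.card_le_rank_boundary₂_add_one
  rw [Fintype.card_coe] at hranks
  omega

theorem IsMinCycle.card_le_card_edges_add_one (hZ : IsMinCycle Z) : #Z ≤ #(edges Z) + 1 :=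
  hZ.card_le_rank_boundary₂_add_one.trans <| by simpa using rank_le_card_height (boundary₂ Z)

theorem IsMinCycle.two_mul_card_le_sq (hZ : IsMinCycle Z) : 2 * #Z ≤ #(vertices Z) ^ 2 := by
  have hchoose : 2 * (#(vertices Z)).choose 2 = #(vertices Z) * (#(vertices Z) - 1) := by
    rw [Nat.choose_two_right]
    exact Nat.mul_div_cancel' (Nat.even_mul_pred_self _).two_dvd
  have hedges := card_edges_le_choose (Z := Z)
  have hfe := hZ.card_le_card_edges_add_one
  have hv := hZ.three_le_card_vertices
  obtain ⟨w, hw⟩ : ∃ w, #(vertices Z) = w + 1 := ⟨_, (Nat.succ_pred_eq_of_pos (by omega)).symm⟩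
  rw [hw, Nat.add_sub_cancel] at hchoose
  rw [hw] at hedges hv ⊢
  nlinarith

theorem IsMinCycle.two_mul_card_vertices_le (hZ : IsMinCycle Z) :
    2 * #(vertices Z) ≤ #Z + 4 := by
  have heuler := hZ.card_vertices_add_card_le
  have hedges := hZ.1.two_mul_card_edges_le
  omega

/-- **Lemma (range of vertex numbers of a minimal 2-cycle).**
If `Z` is an inclusion-minimal `Z/2` 2-cycle with exactly `f` members, and `v` is the
number of vertices covered by the members of `Z`, then `√(2f) ≤ v ≤ f/2 + 2`. -/
theorem minCycle_vertex_bounds (Z : Finset (Finset ℕ)) (hZ : IsMinCycle Z) (f v : ℕ)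
    (hf : Z.card = f) (hv : (Z.biUnion id).card = v) :
    Real.sqrt (2 * f) ≤ v ∧ (v : ℝ) ≤ (f : ℝ) / 2 + 2 := by
  replace hv : #(vertices Z) = v := hv
  subst hf hv
  constructor
  · rw [Real.sqrt_le_left (by positivity)]
    exact_mod_cast hZ.two_mul_card_le_sq
  · have hupper : (2 * #(vertices Z) : ℝ) ≤ #Z + 4 := by
      exact_mod_cast hZ.two_mul_card_vertices_le
    linarith
end

section
/- There is a constant C > 0 such that for every even positive integer f and every connected triangulated closed surface X with f faces, the number of gluing stories g ∈ GS(f) for which the quotient complex X(g) is simplicially isomorphic to X is at least C^{−f} · f^{5f/2}. -/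
/-- A connected triangulated closed surface on the vertex set `Fin w`, given by its
(nonempty) set `F` of 3-element faces: every edge lies in exactly two faces, the link
of every vertex is connected, any two faces are joined by a chain of faces in which
consecutive faces share an edge, and every vertex lies in some face. -/
def IsClosedSurface {w : ℕ} (F : Finset (Finset (Fin w))) : Prop :=
  F.Nonempty ∧
  (∀ t ∈ F, t.card = 3) ∧
  (∀ e : Finset (Fin w), e.card = 2 → (∃ t ∈ F, e ⊆ t) →
    (F.filter (fun t => e ⊆ t)).card = 2) ∧
  (∀ v : Fin w, ∃ t ∈ F, v ∈ t) ∧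
  (∀ v a b : Fin w,
    (∃ t ∈ F, v ∈ t ∧ a ∈ t ∧ a ≠ v) → (∃ t ∈ F, v ∈ t ∧ b ∈ t ∧ b ≠ v) →
    Relation.ReflTransGen (fun x y => ({v, x, y} : Finset (Fin w)) ∈ F) a b) ∧
  (∀ t ∈ F, ∀ t' ∈ F,
    Relation.ReflTransGen (fun s s' => s ∈ F ∧ s' ∈ F ∧ (s ∩ s').card = 2) t t')

/-- A gluing story on `f` labelled triangles. Each triangle `j : Fin f` has three edge
slots indexed by `Fin 3` (slot `(j,a)` is the edge opposite corner `(j,a)`, with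
endpoints the corners `(j,a+1)` and `(j,a+2)`). A gluing story is a sequence of `3f/2`
gluings, each consisting of an ordered pair of distinct edge slots together with a
`Bool` selecting one of the two bijections between the endpoint pairs, such that every
one of the `3f` slots occurs in exactly one gluing. -/
def GluingStory (f : ℕ) :=
  {g : Fin (3 * f / 2) → (Fin f × Fin 3) × (Fin f × Fin 3) × Bool //
    (∀ k, (g k).1 ≠ (g k).2.1) ∧
    ∀ s : Fin f × Fin 3, ∃! k, s = (g k).1 ∨ s = (g k).2.1}

/-- The identifications of corners prescribed by the gluings of a gluing story: the
slot `(j,a)` has endpoint corners `(j,a+1)` and `(j,a+2)`, and each gluing identifies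
the endpoints of its two slots according to the chosen bijection (the `Bool`). The
equivalence relation generated by this relation defines the vertices of the quotient
complex. -/
def cornerRel {f : ℕ} (g : GluingStory f) : Fin f × Fin 3 → Fin f × Fin 3 → Prop :=
  fun x y => ∃ k : Fin (3 * f / 2),
    (x = ((g.1 k).1.1, (g.1 k).1.2 + 1) ∧
      y = ((g.1 k).2.1.1, (g.1 k).2.1.2 + (if (g.1 k).2.2 then 2 else 1))) ∨
    (x = ((g.1 k).1.1, (g.1 k).1.2 + 2) ∧
      y = ((g.1 k).2.1.1, (g.1 k).2.1.2 + (if (g.1 k).2.2 then 1 else 2)))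

/-- `X(g)` is simplicially isomorphic to the complex `F` on `Fin w`: there is a
bijection `φ` from the `cornerRel`-classes to `Fin w` under which, for each triangle
`j`, the classes of its three corners are distinct and form a face of `F`, and
`j ↦ face` is a bijection between the `f` triangles and the faces of `F`. -/
def IsoToSurface {f w : ℕ} (g : GluingStory f) (F : Finset (Finset (Fin w))) : Prop :=
  ∃ φ : Quot (cornerRel g) → Fin w, Function.Bijective φ ∧
    (∀ j : Fin f,
      ({φ (Quot.mk _ (j, 0)), φ (Quot.mk _ (j, 1)), φ (Quot.mk _ (j, 2))} :
        Finset (Fin w)).card = 3 ∧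
      ({φ (Quot.mk _ (j, 0)), φ (Quot.mk _ (j, 1)), φ (Quot.mk _ (j, 2))} :
        Finset (Fin w)) ∈ F) ∧
    Function.Injective (fun j : Fin f =>
      ({φ (Quot.mk _ (j, 0)), φ (Quot.mk _ (j, 1)), φ (Quot.mk _ (j, 2))} :
        Finset (Fin w))) ∧
    Finset.image (fun j : Fin f =>
      ({φ (Quot.mk _ (j, 0)), φ (Quot.mk _ (j, 1)), φ (Quot.mk _ (j, 2))} :
        Finset (Fin w))) Finset.univ = F


/-!
A pair of bijections `σ : Fin f ≃ F` (naming the faces of `X` by triangles) and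
`τ : Fin (3f/2) ≃ edges F` (ordering the edges) determines a gluing story: its `k`-th gluing
glues the two slots lying over the edge `τ k`, matching the corners that carry the same vertex.
The quotient of this story is `X`: corners of one vertex are identified because the link of a
vertex is connected. Conversely the story recovers `σ` from the single value `σ j₀`, since an
edge lies in exactly two faces and the faces are connected through edges, and then recovers `τ`.
Hence `f! (3f/2)! ≤ f · #{g | X(g) ≅ X}`; with `nⁿ ≤ eⁿ n!` this gives
`f^(5f/2) ≤ e^(5f/2) f! (3f/2)!`, and `e^(5f/2) f ≤ 32^f`.
-/

open Finset Function
open scoped Nat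

section Triangle

variable {α : Type*} [DecidableEq α] {c c' : Fin 3 → α}

theorem image_univ_fin_three (c : Fin 3 → α) : univ.image c = {c 0, c 1, c 2} := by
  rw [show (univ : Finset (Fin 3)) = {0, 1, 2} by decide]
  simp

def oppEdge (c : Fin 3 → α) (a : Fin 3) : Finset α := {c (a + 1), c (a + 2)}

theorem card_oppEdge (hc : Injective c) (a : Fin 3) : (oppEdge c a).card = 2 :=
  card_pair fun h => (by decide : ∀ a : Fin 3, a + 1 ≠ a + 2) a (hc h)

theorem notMem_oppEdge (hc : Injective c) (a : Fin 3) : c a ∉ oppEdge c a := by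
  simp only [oppEdge, mem_insert, mem_singleton, hc.eq_iff]
  revert a; decide

theorem oppEdge_subset_image (a : Fin 3) : oppEdge c a ⊆ univ.image c := by
  simp [oppEdge, insert_subset_iff]

theorem oppEdge_injective (hc : Injective c) : Injective (oppEdge c) := by
  intro a a' h
  by_contra hne
  have : c a ∈ oppEdge c a' := by
    simp only [oppEdge, mem_insert, mem_singleton, hc.eq_iff]
    exact (by decide : ∀ a a' : Fin 3, a ≠ a' → a = a' + 1 ∨ a = a' + 2) a a' hne
  exact notMem_oppEdge hc a (h ▸ this)

theorem exists_oppEdge_eq {e : Finset α} (he : e ⊆ univ.image c)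
    (h2 : e.card = 2) : ∃ a, oppEdge c a = e := by
  obtain ⟨x, y, hxy, rfl⟩ := card_eq_two.mp h2
  obtain ⟨i, -, rfl⟩ := mem_image.mp (he (mem_insert_self x {y}))
  obtain ⟨i', -, rfl⟩ := mem_image.mp (he (mem_insert_of_mem (mem_singleton_self _)))
  have hii' : i ≠ i' := fun h => hxy (congrArg c h)
  have : ∃ a, (a + 1 = i ∧ a + 2 = i') ∨ (a + 1 = i' ∧ a + 2 = i) :=
    (by decide : ∀ i i' : Fin 3, i ≠ i' →
      ∃ a, (a + 1 = i ∧ a + 2 = i') ∨ (a + 1 = i' ∧ a + 2 = i)) i i' hii'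
  obtain ⟨a, ⟨h1, h2⟩ | ⟨h1, h2⟩⟩ := this
  · exact ⟨a, by rw [oppEdge, h1, h2]⟩
  · exact ⟨a, by rw [oppEdge, h1, h2, pair_comm]⟩

/-- The `Bool` selects the matching of the endpoints of two labelled copies of one edge,
in the convention of `cornerRel`. -/
theorem exists_bool_of_oppEdge_eq (hc : Injective c) {a a' : Fin 3}
    (h : oppEdge c a = oppEdge c' a') :
    ∃ b : Bool, c' (a' + if b then 2 else 1) = c (a + 1) ∧
      c' (a' + if b then 1 else 2) = c (a + 2) := by
  have h1 : c (a + 1) ∈ oppEdge c' a' := h ▸ mem_insert_self _ _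
  have h2 : c (a + 2) ∈ oppEdge c' a' := h ▸ mem_insert_of_mem (mem_singleton_self _)
  have hne : c (a + 1) ≠ c (a + 2) := fun h => (by decide : ∀ a : Fin 3, a + 1 ≠ a + 2) a (hc h)
  simp only [oppEdge, mem_insert, mem_singleton] at h1 h2
  rcases h1 with h1 | h1
  · exact ⟨false, by simp only [Bool.false_eq_true, if_false]; grind⟩
  · exact ⟨true, by simp only [if_true]; grind⟩

end Triangle

section ClosedSurface

variable {w : ℕ}

def edges (F : Finset (Finset (Fin w))) : Finset (Finset (Fin w)) :=
  F.biUnion (powersetCard 2)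

theorem mem_edges {F : Finset (Finset (Fin w))} {e : Finset (Fin w)} :
    e ∈ edges F ↔ e.card = 2 ∧ ∃ t ∈ F, e ⊆ t := by
  simp only [edges, mem_biUnion, mem_powersetCard]
  tauto

variable {F : Finset (Finset (Fin w))} (hF : IsClosedSurface F)
include hF

namespace IsClosedSurface

theorem card_eq_three {t : Finset (Fin w)} (ht : t ∈ F) : t.card = 3 := hF.2.1 t ht

theorem exists_mem_face (v : Fin w) : ∃ t ∈ F, v ∈ t := hF.2.2.2.1 v

theorem link_reflTransGen {v a b : Fin w} (ha : ∃ t ∈ F, v ∈ t ∧ a ∈ t ∧ a ≠ v)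
    (hb : ∃ t ∈ F, v ∈ t ∧ b ∈ t ∧ b ≠ v) :
    Relation.ReflTransGen (fun x y => ({v, x, y} : Finset (Fin w)) ∈ F) a b :=
  hF.2.2.2.2.1 v a b ha hb

theorem faces_reflTransGen {t t' : Finset (Fin w)} (ht : t ∈ F) (ht' : t' ∈ F) :
    Relation.ReflTransGen (fun s s' => s ∈ F ∧ s' ∈ F ∧ (s ∩ s').card = 2) t t' :=
  hF.2.2.2.2.2 t ht t' ht'

theorem card_faces_superset {e : Finset (Fin w)} (he : e ∈ edges F) :
    (F.filter (e ⊆ ·)).card = 2 :=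
  hF.2.2.1 e (mem_edges.mp he).1 (mem_edges.mp he).2

theorem eq_of_superset_of_ne {e t t' t₀ : Finset (Fin w)} (he : e ∈ edges F)
    (ht : t ∈ F) (ht' : t' ∈ F) (ht₀ : t₀ ∈ F) (het : e ⊆ t) (het' : e ⊆ t') (het₀ : e ⊆ t₀)
    (hne : t ≠ t₀) (hne' : t' ≠ t₀) : t = t' := by
  by_contra h
  have hsub : {t, t', t₀} ⊆ F.filter (e ⊆ ·) := by
    simp [insert_subset_iff, ht, ht', ht₀, het, het', het₀]
  have := card_le_card hsub
  rw [card_insert_of_notMem (by simp [h, hne]), card_pair hne', hF.card_faces_superset he] at this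
  omega

theorem card_edges : 2 * (edges F).card = 3 * F.card := by
  have hbelow : ∀ t ∈ F, ((edges F).bipartiteBelow (· ⊆ ·) t).card = 3 := fun t ht => by
    have : (edges F).bipartiteBelow (· ⊆ ·) t = t.powersetCard 2 := by
      ext e
      simp only [bipartiteBelow, mem_filter, mem_edges, mem_powersetCard]
      exact ⟨fun ⟨⟨h2, _⟩, hsub⟩ => ⟨hsub, h2⟩, fun ⟨hsub, h2⟩ => ⟨⟨h2, t, ht, hsub⟩, hsub⟩⟩
    rw [this, card_powersetCard, hF.card_eq_three ht]
    rfl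
  have := card_mul_eq_card_mul (fun e t : Finset (Fin w) => e ⊆ t)
    (fun e he => hF.card_faces_superset he) hbelow
  omega

end IsClosedSurface

end ClosedSurface

section Story

variable {w f : ℕ} {F : Finset (Finset (Fin w))} (hF : IsClosedSurface F) (σ : Fin f ≃ F)

/-- Triangle `j` realises the face `σ j`, its corners listed in increasing order. -/
noncomputable def corner (j : Fin f) : Fin 3 ↪o Fin w :=
  (σ j : Finset (Fin w)).orderEmbOfFin (hF.card_eq_three (σ j).2)

theorem corner_injective (j : Fin f) : Injective (corner hF σ j) := (corner hF σ j).injective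

theorem image_corner (j : Fin f) : univ.image (corner hF σ j) = σ j :=
  image_orderEmbOfFin_univ _ _

theorem corner_mem (j : Fin f) (a : Fin 3) : corner hF σ j a ∈ (σ j : Finset (Fin w)) :=
  orderEmbOfFin_mem _ _ a

theorem exists_corner_eq {j : Fin f} {v : Fin w} (hv : v ∈ (σ j : Finset (Fin w))) :
    ∃ a, corner hF σ j a = v := by
  rw [← image_corner hF σ j] at hv
  simpa using hv

theorem corner_congr {σ' : Fin f ≃ F} {j : Fin f} (h : σ j = σ' j) :
    corner hF σ j = corner hF σ' j := by
  unfold corner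
  congr 2

noncomputable def slotEdge (s : Fin f × Fin 3) : Finset (Fin w) := oppEdge (corner hF σ s.1) s.2

theorem slotEdge_subset (s : Fin f × Fin 3) : slotEdge hF σ s ⊆ σ s.1 :=
  image_corner hF σ s.1 ▸ oppEdge_subset_image s.2

theorem slotEdge_mem_edges (s : Fin f × Fin 3) : slotEdge hF σ s ∈ edges F :=
  mem_edges.mpr ⟨card_oppEdge (corner_injective hF σ s.1) s.2, σ s.1, (σ s.1).2,
    slotEdge_subset hF σ s⟩

theorem exists_slotEdge_eq {j : Fin f} {e : Finset (Fin w)} (he : e ⊆ σ j) (h2 : e.card = 2) :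
    ∃ a, slotEdge hF σ (j, a) = e :=
  exists_oppEdge_eq (c := corner hF σ j) (by rwa [image_corner]) h2

theorem fst_ne_of_slotEdge_eq {s s' : Fin f × Fin 3} (h : slotEdge hF σ s = slotEdge hF σ s')
    (hne : s ≠ s') : s.1 ≠ s'.1 := by
  intro h1
  obtain ⟨j, a⟩ := s
  obtain ⟨j', a'⟩ := s'
  dsimp only at h1
  subst h1
  exact hne (congrArg _ (oppEdge_injective (corner_injective hF σ j) h))

theorem card_filter_slotEdge_eq {e : Finset (Fin w)} (he : e ∈ edges F) :
    (univ.filter (slotEdge hF σ · = e)).card = 2 := by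
  rw [← hF.card_faces_superset he]
  refine card_bij (fun s _ => (σ s.1 : Finset (Fin w))) (fun s hs => ?_) (fun s hs s' hs' h => ?_)
    fun t ht => ?_
  · rw [mem_filter] at hs ⊢
    exact ⟨(σ s.1).2, hs.2 ▸ slotEdge_subset hF σ s⟩
  · rw [mem_filter] at hs hs'
    by_contra hne
    exact fst_ne_of_slotEdge_eq hF σ (hs.2.trans hs'.2.symm) hne (σ.injective (Subtype.ext h))
  · obtain ⟨htF, het⟩ := mem_filter.mp ht
    obtain ⟨a, ha⟩ := exists_slotEdge_eq hF σ (j := σ.symm ⟨t, htF⟩) (by simpa using het)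
      (mem_edges.mp he).1
    exact ⟨(σ.symm ⟨t, htF⟩, a), by simpa using ha, by simp⟩

def GluesAlong (e : Finset (Fin w)) (x : (Fin f × Fin 3) × (Fin f × Fin 3) × Bool) : Prop :=
  x.1 ≠ x.2.1 ∧ univ.filter (slotEdge hF σ · = e) = {x.1, x.2.1} ∧
    corner hF σ x.2.1.1 (x.2.1.2 + if x.2.2 then 2 else 1) = corner hF σ x.1.1 (x.1.2 + 1) ∧
    corner hF σ x.2.1.1 (x.2.1.2 + if x.2.2 then 1 else 2) = corner hF σ x.1.1 (x.1.2 + 2)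

theorem exists_gluesAlong {e : Finset (Fin w)} (he : e ∈ edges F) : ∃ x, GluesAlong hF σ e x := by
  obtain ⟨s, s', hne, hss'⟩ := card_eq_two.mp (card_filter_slotEdge_eq hF σ he)
  have hslot : ∀ x ∈ ({s, s'} : Finset _), slotEdge hF σ x = e := fun x hx =>
    (mem_filter.mp (hss'.symm ▸ hx : x ∈ univ.filter (slotEdge hF σ · = e))).2
  obtain ⟨b, hb⟩ := exists_bool_of_oppEdge_eq (corner_injective hF σ s.1)
    ((hslot s (by simp)).trans (hslot s' (by simp)).symm)
  exact ⟨(s, s', b), hne, hss', hb⟩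

variable (τ : Fin (3 * f / 2) ≃ edges F)

noncomputable def gluing (k : Fin (3 * f / 2)) : (Fin f × Fin 3) × (Fin f × Fin 3) × Bool :=
  (exists_gluesAlong hF σ (τ k).2).choose

theorem gluesAlong_gluing (k : Fin (3 * f / 2)) : GluesAlong hF σ (τ k) (gluing hF σ τ k) :=
  (exists_gluesAlong hF σ (τ k).2).choose_spec

theorem eq_or_eq_gluing_iff {k : Fin (3 * f / 2)} {s : Fin f × Fin 3} :
    s = (gluing hF σ τ k).1 ∨ s = (gluing hF σ τ k).2.1 ↔ slotEdge hF σ s = τ k := by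
  have := congrArg (s ∈ ·) (gluesAlong_gluing hF σ τ k).2.1
  simp_all

noncomputable def story : GluingStory f :=
  ⟨gluing hF σ τ, fun k => (gluesAlong_gluing hF σ τ k).1, fun s =>
    ⟨τ.symm ⟨slotEdge hF σ s, slotEdge_mem_edges hF σ s⟩,
      (eq_or_eq_gluing_iff hF σ τ).mpr (by simp),
      fun k hk => τ.eq_symm_apply.mpr (Subtype.ext ((eq_or_eq_gluing_iff hF σ τ).mp hk).symm)⟩⟩

theorem corner_eq_of_cornerRel {x y : Fin f × Fin 3} (h : cornerRel (story hF σ τ) x y) :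
    corner hF σ x.1 x.2 = corner hF σ y.1 y.2 := by
  obtain ⟨k, ⟨rfl, rfl⟩ | ⟨rfl, rfl⟩⟩ := h
  · exact (gluesAlong_gluing hF σ τ k).2.2.1.symm
  · exact (gluesAlong_gluing hF σ τ k).2.2.2.symm

theorem mk_eq_of_mem_gluing (k : Fin (3 * f / 2)) {a a' : Fin 3}
    (h : corner hF σ (gluing hF σ τ k).1.1 a = corner hF σ (gluing hF σ τ k).2.1.1 a')
    (hv : corner hF σ (gluing hF σ τ k).1.1 a ∈ (τ k : Finset (Fin w))) :
    Quot.mk (cornerRel (story hF σ τ)) ((gluing hF σ τ k).1.1, a) =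
      Quot.mk _ ((gluing hF σ τ k).2.1.1, a') := by
  obtain ⟨-, -, h1, h2⟩ := gluesAlong_gluing hF σ τ k
  have hedge := (eq_or_eq_gluing_iff hF σ τ (k := k)).mp (Or.inl rfl)
  rw [← hedge, slotEdge, oppEdge, mem_insert, mem_singleton] at hv
  have hinj := corner_injective hF σ
  rcases hv with hv | hv
  · rw [hinj _ hv, hinj _ (h.symm.trans (hv.trans h1.symm))]
    exact Quot.sound ⟨k, Or.inl ⟨rfl, rfl⟩⟩
  · rw [hinj _ hv, hinj _ (h.symm.trans (hv.trans h2.symm))]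
    exact Quot.sound ⟨k, Or.inr ⟨rfl, rfl⟩⟩

theorem eq_or_eq_gluing_of_subset {k : Fin (3 * f / 2)} {j : Fin f}
    (h : (τ k : Finset (Fin w)) ⊆ σ j) :
    j = (gluing hF σ τ k).1.1 ∨ j = (gluing hF σ τ k).2.1.1 := by
  obtain ⟨a, ha⟩ := exists_slotEdge_eq hF σ h (mem_edges.mp (τ k).2).1
  rcases (eq_or_eq_gluing_iff hF σ τ).mpr ha with h | h <;> simp [← h]

theorem mk_eq_of_corner_eq_of_mem {x y : Fin f × Fin 3} {u : Fin w}
    (h : corner hF σ x.1 x.2 = corner hF σ y.1 y.2) (hu : u ≠ corner hF σ x.1 x.2)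
    (hux : u ∈ (σ x.1 : Finset (Fin w))) (huy : u ∈ (σ y.1 : Finset (Fin w))) :
    Quot.mk (cornerRel (story hF σ τ)) x = Quot.mk _ y := by
  obtain ⟨j, a⟩ := x
  obtain ⟨j', a'⟩ := y
  dsimp only at h hu hux huy
  by_cases hjj : j = j'
  · subst hjj
    rw [corner_injective hF σ j h]
  have he : {corner hF σ j a, u} ∈ edges F := mem_edges.mpr ⟨card_pair hu.symm, σ j, (σ j).2,
    insert_subset (corner_mem hF σ j a) (singleton_subset_iff.mpr hux)⟩
  obtain ⟨k, hk⟩ := τ.surjective ⟨_, he⟩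
  replace hk : (τ k : Finset (Fin w)) = {corner hF σ j a, u} := congrArg Subtype.val hk
  have hsub : ∀ {i}, corner hF σ j a ∈ (σ i : Finset (Fin w)) → u ∈ (σ i : Finset (Fin w)) →
      (τ k : Finset (Fin w)) ⊆ σ i := fun hv hu =>
    hk ▸ insert_subset hv (singleton_subset_iff.mpr hu)
  have hv : corner hF σ j a ∈ (τ k : Finset (Fin w)) := by simp [hk]
  rcases eq_or_eq_gluing_of_subset hF σ τ (hsub (corner_mem hF σ j a) hux) with rfl | rfl <;>
    rcases eq_or_eq_gluing_of_subset hF σ τ (hsub (h ▸ corner_mem hF σ j' a') huy) with rfl | rfl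
  · exact absurd rfl hjj
  · exact mk_eq_of_mem_gluing hF σ τ k h hv
  · exact (mk_eq_of_mem_gluing hF σ τ k h.symm (h ▸ hv)).symm
  · exact absurd rfl hjj

theorem mk_eq_of_link_chain {v p p' : Fin w}
    (hch : Relation.ReflTransGen (fun x y => ({v, x, y} : Finset (Fin w)) ∈ F) p p')
    {x y : Fin f × Fin 3} (hx : corner hF σ x.1 x.2 = v) (hy : corner hF σ y.1 y.2 = v)
    (hpx : p ∈ (σ x.1 : Finset (Fin w))) (hpv : p ≠ v)
    (hpy : p' ∈ (σ y.1 : Finset (Fin w))) (hpv' : p' ≠ v) :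
    Quot.mk (cornerRel (story hF σ τ)) x = Quot.mk _ y := by
  induction hch generalizing y with
  | refl => exact mk_eq_of_corner_eq_of_mem hF σ τ (hx.trans hy.symm) (hx ▸ hpv) hpx hpy
  | @tail b c _ hbc ih =>
    obtain ⟨j, hj⟩ := σ.surjective ⟨_, hbc⟩
    replace hj : (σ j : Finset (Fin w)) = {v, b, c} := congrArg Subtype.val hj
    obtain ⟨a, ha⟩ := exists_corner_eq hF σ (v := v) (j := j) (by simp [hj])
    have hbv : b ≠ v := by
      rintro rfl
      have h3 := hF.card_eq_three hbc
      rw [insert_idem] at h3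
      exact absurd (h3 ▸ card_le_two) (by norm_num)
    exact (ih (y := (j, a)) ha (by simp [hj]) hbv).trans
      (mk_eq_of_corner_eq_of_mem hF σ τ (ha.trans hy.symm) (ha ▸ hpv') (by simp [hj]) hpy)

theorem mk_eq_of_corner_eq {x y : Fin f × Fin 3} (h : corner hF σ x.1 x.2 = corner hF σ y.1 y.2) :
    Quot.mk (cornerRel (story hF σ τ)) x = Quot.mk _ y := by
  have hv := corner_mem hF σ x.1 x.2
  have hv' := h ▸ corner_mem hF σ y.1 y.2
  have h3 : ∀ j, 1 < (σ j : Finset (Fin w)).card := fun j => by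
    rw [hF.card_eq_three (σ j).2]; norm_num
  obtain ⟨p, hp, hpv⟩ := exists_mem_ne (h3 x.1) (corner hF σ x.1 x.2)
  obtain ⟨p', hp', hpv'⟩ := exists_mem_ne (h3 y.1) (corner hF σ x.1 x.2)
  exact mk_eq_of_link_chain hF σ τ (hF.link_reflTransGen ⟨_, (σ x.1).2, hv, hp, hpv⟩
    ⟨_, (σ y.1).2, hv', hp', hpv'⟩) rfl h.symm hp hpv hp' hpv'

theorem isoToSurface_story : IsoToSurface (story hF σ τ) F := by
  let ψ : Quot (cornerRel (story hF σ τ)) → Fin w :=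
    Quot.lift (fun x => corner hF σ x.1 x.2) fun _ _ => corner_eq_of_cornerRel hF σ τ
  have hface : ∀ j, ({ψ (Quot.mk _ (j, 0)), ψ (Quot.mk _ (j, 1)), ψ (Quot.mk _ (j, 2))} :
      Finset (Fin w)) = σ j := fun j => by
    rw [← image_corner hF σ j, image_univ_fin_three]
  refine ⟨ψ, ⟨fun x y hxy => ?_, fun v => ?_⟩, fun j => ?_, fun j j' h => ?_, ?_⟩
  · induction x using Quot.ind
    induction y using Quot.ind
    exact mk_eq_of_corner_eq hF σ τ hxy
  · obtain ⟨t, ht, hvt⟩ := hF.exists_mem_face v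
    obtain ⟨j, hj⟩ := σ.surjective ⟨t, ht⟩
    obtain ⟨a, ha⟩ := exists_corner_eq hF σ (j := j) (by rwa [hj])
    exact ⟨Quot.mk _ (j, a), ha⟩
  · rw [hface]
    exact ⟨hF.card_eq_three (σ j).2, (σ j).2⟩
  · simp only [hface] at h
    exact σ.injective (Subtype.ext h)
  · simp only [hface]
    ext t
    simpa using ⟨fun ⟨j, hj⟩ => hj ▸ (σ j).2, fun ht => ⟨σ.symm ⟨t, ht⟩, by simp⟩⟩

section Injectivity

variable {σ' : Fin f ≃ F} {τ' : Fin (3 * f / 2) ≃ edges F}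
  (hg : gluing hF σ τ = gluing hF σ' τ')
include hg

theorem slotEdge_eq_of_gluing_eq {k : Fin (3 * f / 2)} {s : Fin f × Fin 3}
    (hs : slotEdge hF σ s = τ k) : slotEdge hF σ' s = τ' k :=
  (eq_or_eq_gluing_iff hF σ' τ').mp (hg ▸ (eq_or_eq_gluing_iff hF σ τ).mpr hs)

theorem subset_of_gluing_eq {k : Fin (3 * f / 2)} {j : Fin f}
    (hj : (τ k : Finset (Fin w)) ⊆ σ j) : (τ' k : Finset (Fin w)) ⊆ σ' j := by
  obtain ⟨a, ha⟩ := exists_slotEdge_eq hF σ hj (mem_edges.mp (τ k).2).1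
  exact slotEdge_eq_of_gluing_eq hF σ τ hg ha ▸ slotEdge_subset hF σ' (j, a)

/-- An edge lies in only two faces, so agreement of `σ` and `σ'` on one triangle at a glued edge
passes to the other. -/
theorem apply_eq_of_gluing_eq {k : Fin (3 * f / 2)} {j j' : Fin f}
    (hj : (τ k : Finset (Fin w)) ⊆ σ j) (hj' : (τ k : Finset (Fin w)) ⊆ σ j') (hne : j ≠ j')
    (h : σ j = σ' j) : σ j' = σ' j' := by
  obtain ⟨a, ha⟩ := exists_slotEdge_eq hF σ hj (mem_edges.mp (τ k).2).1
  have hτ : (τ' k : Finset (Fin w)) = τ k := by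
    rw [← ha, ← slotEdge_eq_of_gluing_eq hF σ τ hg ha, slotEdge, slotEdge, corner_congr hF σ h]
  refine Subtype.ext (hF.eq_of_superset_of_ne (τ k).2 (σ j').2 (σ' j').2 (σ j).2 hj'
    (hτ ▸ subset_of_gluing_eq hF σ τ hg hj') hj ?_ ?_)
  · exact fun h' => hne (σ.injective (Subtype.ext h')).symm
  · exact fun h' => hne (σ'.injective (Subtype.ext (h'.trans (congrArg Subtype.val h)))).symm

theorem eq_of_gluing_eq {j₀ : Fin f} (h₀ : σ j₀ = σ' j₀) : σ = σ' := by
  suffices ∀ t (ht : t ∈ F), σ (σ.symm ⟨t, ht⟩) = σ' (σ.symm ⟨t, ht⟩) from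
    Equiv.ext fun j => by simpa using this _ (σ j).2
  intro t ht
  induction hF.faces_reflTransGen (σ j₀).2 ht with
  | refl => simpa using h₀
  | @tail b c _ hbc ih =>
    obtain ⟨hb, hc, hbc2⟩ := hbc
    obtain ⟨k, hk⟩ := τ.surjective ⟨b ∩ c, mem_edges.mpr ⟨hbc2, b, hb, inter_subset_left⟩⟩
    replace hk : (τ k : Finset (Fin w)) = b ∩ c := congrArg Subtype.val hk
    refine apply_eq_of_gluing_eq hF σ τ hg (k := k) (by simp [hk])
      (by simp [hk]) (fun h => ?_) (ih hb)
    have hbc : b = c := by simpa using congrArg Subtype.val (σ.symm.injective h)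
    rw [hbc, inter_self, hF.card_eq_three hc] at hbc2
    exact absurd hbc2 (by norm_num)

end Injectivity

theorem injective_story_prod_apply (j₀ : Fin f) :
    Injective fun p : (Fin f ≃ F) × (Fin (3 * f / 2) ≃ edges F) =>
      ((⟨story hF p.1 p.2, isoToSurface_story hF p.1 p.2⟩ : {g // IsoToSurface g F}), p.1 j₀) := by
  rintro ⟨σ, τ⟩ ⟨σ', τ'⟩ h
  simp only [Prod.mk.injEq, Subtype.mk.injEq] at h
  have hg : gluing hF σ τ = gluing hF σ' τ' := congrArg Subtype.val h.1
  obtain rfl := eq_of_gluing_eq hF σ τ hg h.2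
  refine Prod.ext rfl (Equiv.ext fun k => Subtype.ext ?_)
  have hk := (eq_or_eq_gluing_iff hF σ τ (k := k)).mp (Or.inl rfl)
  rw [← hk, slotEdge_eq_of_gluing_eq hF σ τ hg hk]

end Story

instance (f : ℕ) : Finite (GluingStory f) := Subtype.finite

theorem factorial_mul_factorial_le_card_mul {w f : ℕ} {F : Finset (Finset (Fin w))}
    (hF : IsClosedSurface F) (hf : 0 < f) (hcard : F.card = f) :
    f ! * (3 * f / 2)! ≤ Nat.card {g : GluingStory f // IsoToSurface g F} * f := by
  have hσ : Fintype.card (Fin f) = Fintype.card F := by simp [hcard]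
  have hτ : Fintype.card (Fin (3 * f / 2)) = Fintype.card (edges F) := by
    have := hF.card_edges
    simp only [Fintype.card_fin, Fintype.card_coe]
    omega
  calc f ! * (3 * f / 2)! = Nat.card ((Fin f ≃ F) × (Fin (3 * f / 2) ≃ edges F)) := by
        rw [Nat.card_prod, Nat.card_eq_fintype_card, Nat.card_eq_fintype_card,
          Fintype.card_equiv (Fintype.equivOfCardEq hσ),
          Fintype.card_equiv (Fintype.equivOfCardEq hτ), Fintype.card_fin, Fintype.card_fin]
    _ ≤ Nat.card ({g : GluingStory f // IsoToSurface g F} × F) :=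
        Nat.card_le_card_of_injective _ (injective_story_prod_apply hF ⟨0, hf⟩)
    _ = Nat.card {g : GluingStory f // IsoToSurface g F} * f := by simp [Nat.card_prod, hcard]

theorem pow_self_le_exp_mul_factorial (n : ℕ) : (n : ℝ) ^ n ≤ Real.exp n * n ! := by
  have := Real.pow_div_factorial_le_exp (n : ℝ) n.cast_nonneg n
  rwa [div_le_iff₀ (by positivity)] at this

theorem pow_le_exp_mul_factorial_mul_factorial (m : ℕ) :
    ((2 * m : ℕ) : ℝ) ^ (5 * m) ≤ Real.exp (5 * m) * ((2 * m)! * (3 * m)! : ℕ) := by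
  calc ((2 * m : ℕ) : ℝ) ^ (5 * m) = ((2 * m : ℕ) : ℝ) ^ (2 * m) * ((2 * m : ℕ) : ℝ) ^ (3 * m) := by
        rw [← pow_add]; ring_nf
    _ ≤ ((2 * m : ℕ) : ℝ) ^ (2 * m) * ((3 * m : ℕ) : ℝ) ^ (3 * m) := by gcongr; omega
    _ ≤ (Real.exp (2 * m : ℕ) * (2 * m)!) * (Real.exp (3 * m : ℕ) * (3 * m)!) := by
        gcongr <;> exact pow_self_le_exp_mul_factorial _
    _ = Real.exp (5 * m) * ((2 * m)! * (3 * m)! : ℕ) := by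
        rw [mul_mul_mul_comm, ← Real.exp_add]; push_cast; ring_nf

theorem exp_five_mul_mul_le (m : ℕ) : Real.exp (5 * m) * (2 * m : ℕ) ≤ 32 ^ (2 * m) := by
  have hexp : Real.exp (5 * m) ≤ 243 ^ m := by
    rw [show (5 * m : ℝ) = (5 * m : ℕ) by push_cast; ring, ← Real.exp_one_pow, pow_mul]
    gcongr
    calc Real.exp 1 ^ 5 ≤ 3 ^ 5 := by gcongr; exact Real.exp_one_lt_three.le
      _ = 243 := by norm_num
  have hlin : ((2 * m : ℕ) : ℝ) ≤ 4 ^ m := by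
    have : 2 * m < 2 ^ (2 * m) := Nat.lt_two_pow_self
    rw [pow_mul] at this
    exact_mod_cast this.le
  calc Real.exp (5 * m) * (2 * m : ℕ) ≤ 243 ^ m * 4 ^ m := by gcongr
    _ ≤ 32 ^ (2 * m) := by rw [← mul_pow, pow_mul]; gcongr; norm_num

/-- **Lemma (overcounting).** There is a constant `C > 0` such that for every even
positive integer `f` and every connected triangulated closed surface `X` with `f`
faces, at least `C⁻ᶠ · f^(5f/2)` gluing stories `g ∈ GS(f)` have quotient complex
`X(g)` simplicially isomorphic to `X`. -/
theorem gluingStory_overcount :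
    ∃ C : ℝ, 0 < C ∧ ∀ f : ℕ, 0 < f → Even f → ∀ w : ℕ,
      ∀ F : Finset (Finset (Fin w)), IsClosedSurface F → F.card = f →
      C⁻¹ ^ f * (f : ℝ) ^ ((5 * (f : ℝ)) / 2) ≤
        (Nat.card {g : GluingStory f // IsoToSurface g F} : ℝ) := by
  refine ⟨32, by norm_num, fun f hf heven w F hF hcard => ?_⟩
  obtain ⟨m, rfl⟩ := heven.two_dvd
  set N := Nat.card {g : GluingStory (2 * m) // IsoToSurface g F}
  have hcount : (2 * m)! * (3 * m)! ≤ N * (2 * m) := by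
    simpa [show 3 * (2 * m) / 2 = 3 * m by omega] using
      factorial_mul_factorial_le_card_mul hF hf hcard
  rw [show 5 * ((2 * m : ℕ) : ℝ) / 2 = (5 * m : ℕ) by push_cast; ring, Real.rpow_natCast,
    inv_pow, inv_mul_le_iff₀ (by positivity)]
  calc ((2 * m : ℕ) : ℝ) ^ (5 * m) ≤ Real.exp (5 * m) * ((2 * m)! * (3 * m)! : ℕ) :=
        pow_le_exp_mul_factorial_mul_factorial m
    _ ≤ Real.exp (5 * m) * (2 * m : ℕ) * N := by
        rw [mul_assoc, mul_comm _ (N : ℝ)]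
        gcongr
        exact_mod_cast hcount
    _ ≤ 32 ^ (2 * m) * N := by gcongr; exact exp_five_mul_mul_le m
end

section
/- If X is a connected triangulated closed surface with f faces, then the group of simplicial automorphisms of X has order at most 6f. -/
/-!
An automorphism fixing one face pointwise fixes every face: if it fixes a face `b`, it
maps an adjacent face `c` to a face through the edge `b ∩ c` other than `b`, i.e. to `c`
itself, and then it also fixes the third vertex of `c`; strong connectivity propagates
this to all faces. Hence the stabilizer of a face `t₀` embeds into the permutations of
`t₀`, so it has order at most `3! = 6`, while the orbit of `t₀` has at most `f` elements.
-/

open Equiv MulAction Pointwise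

section

variable {α : Type*} [DecidableEq α]

lemma Equiv.Perm.smul_finset_eq_image (σ : Perm α) (t : Finset α) : σ • t = t.image σ := rfl

lemma Finset.eq_or_eq_of_card_filter_superset_le_two {F : Finset (Finset α)}
    {e b c d : Finset α}
    (hF : (F.filter (e ⊆ ·)).card ≤ 2) (hb : b ∈ F) (hc : c ∈ F) (hd : d ∈ F)
    (hbc : b ≠ c) (heb : e ⊆ b) (hec : e ⊆ c) (hed : e ⊆ d) : d = b ∨ d = c := by
  have hpair : F.filter (e ⊆ ·) = {b, c} := by
    refine (Finset.eq_of_subset_of_card_le ?_ ?_).symm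
    · simp [Finset.insert_subset_iff, hb, hc, heb, hec]
    · rw [Finset.card_pair hbc]; exact hF
  simpa [hpair] using Finset.mem_filter.mpr ⟨hd, hed⟩

lemma Equiv.Perm.forall_mem_apply_eq_of_smul_eq {σ : Perm α} {b c : Finset α}
    (hc : σ • c = c) (hb : ∀ v ∈ b, σ v = v) (hcb : (c \ b).card ≤ 1) :
    ∀ v ∈ c, σ v = v := by
  intro v hv
  by_cases hvb : v ∈ b
  · exact hb v hvb
  have hσv : σ v ∈ c := by
    rw [← hc, smul_finset_eq_image]
    exact Finset.mem_image_of_mem σ hv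
  have hσvb : σ v ∉ b := fun h => hvb (σ.injective (hb _ h) ▸ h)
  exact Finset.card_le_one.mp hcb _ (Finset.mem_sdiff.mpr ⟨hσv, hσvb⟩) _
    (Finset.mem_sdiff.mpr ⟨hv, hvb⟩)

def FaceAdjacent (F : Finset (Finset α)) (s s' : Finset α) : Prop :=
  s ∈ F ∧ s' ∈ F ∧ (s ∩ s').card = 2

variable {F : Finset (Finset α)}

lemma smul_eq_self_of_adjacent
    (hcard : ∀ t ∈ F, t.card = 3)
    (hedge : ∀ e : Finset α, e.card = 2 → (F.filter (e ⊆ ·)).card ≤ 2)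
    {σ : Perm α} (hσ : σ ∈ stabilizer (Perm α) F) {b c : Finset α}
    (hb : b ∈ F) (hc : c ∈ F)
    (hbc : (b ∩ c).card = 2) (hfix : ∀ v ∈ b, σ v = v) : σ • c = c := by
  have hne : b ≠ c := by
    rintro rfl
    rw [Finset.inter_self, hcard b hb] at hbc
    omega
  have hσb : σ • b = b := by
    rw [σ.smul_finset_eq_image, Finset.image_congr (g := id) hfix, Finset.image_id]
  have hσc : σ • c ∈ F := by
    rw [← mem_stabilizer_iff.mp hσ]
    exact Finset.smul_mem_smul_finset_iff σ |>.mpr hc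
  have hedge_σc : b ∩ c ⊆ σ • c := by
    intro v hv
    rw [← hfix v (Finset.mem_inter.mp hv).1, σ.smul_finset_eq_image]
    exact Finset.mem_image_of_mem σ (Finset.mem_inter.mp hv).2
  rcases Finset.eq_or_eq_of_card_filter_superset_le_two (hedge _ hbc) hb hc hσc hne
    Finset.inter_subset_left Finset.inter_subset_right hedge_σc with h | h
  · exact absurd (smul_left_cancel σ (h.trans hσb.symm)).symm hne
  · exact h

lemma forall_mem_apply_eq_of_adjacent
    (hcard : ∀ t ∈ F, t.card = 3)
    (hedge : ∀ e : Finset α, e.card = 2 → (F.filter (e ⊆ ·)).card ≤ 2)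
    {σ : Perm α} (hσ : σ ∈ stabilizer (Perm α) F) {b c : Finset α}
    (hbc : FaceAdjacent F b c)
    (hfix : ∀ v ∈ b, σ v = v) : ∀ v ∈ c, σ v = v := by
  obtain ⟨hb, hc, hinter⟩ := hbc
  refine σ.forall_mem_apply_eq_of_smul_eq
    (smul_eq_self_of_adjacent hcard hedge hσ hb hc hinter hfix) hfix ?_
  rw [Finset.card_sdiff, hcard c hc, hinter]

lemma eq_one_of_forall_mem_face_apply_eq
    (hcard : ∀ t ∈ F, t.card = 3)
    (hedge : ∀ e : Finset α, e.card = 2 → (F.filter (e ⊆ ·)).card ≤ 2)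
    (hcover : ∀ v : α, ∃ t ∈ F, v ∈ t)
    {t₀ : Finset α}
    (hconn : ∀ t ∈ F, Relation.ReflTransGen (FaceAdjacent F) t₀ t)
    {σ : Perm α} (hσ : σ ∈ stabilizer (Perm α) F) (hfix : ∀ v ∈ t₀, σ v = v) :
    σ = 1 := by
  have hfix_reach :
      ∀ t, Relation.ReflTransGen (FaceAdjacent F) t₀ t → ∀ v ∈ t, σ v = v := by
    intro t hreach
    induction hreach with
    | refl => exact hfix
    | tail _ hadj ih =>
      exact forall_mem_apply_eq_of_adjacent hcard hedge hσ hadj ih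
  refine Equiv.ext fun v => ?_
  obtain ⟨t, ht, hvt⟩ := hcover v
  exact hfix_reach t (hconn t ht) v hvt

lemma card_stabilizer_face_le
    (hcard : ∀ t ∈ F, t.card = 3)
    (hedge : ∀ e : Finset α, e.card = 2 → (F.filter (e ⊆ ·)).card ≤ 2)
    (hcover : ∀ v : α, ∃ t ∈ F, v ∈ t)
    {t₀ : Finset α} (ht₀ : t₀ ∈ F)
    (hconn : ∀ t ∈ F, Relation.ReflTransGen (FaceAdjacent F) t₀ t) :
    Nat.card (stabilizer (stabilizer (Perm α) F) t₀) ≤ 6 := by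
  set G := stabilizer (Perm α) F
  have hrestrict :
      Function.Injective (toPermHom (stabilizer G (t₀ : Set α)) (t₀ : Set α)) := by
    refine (injective_iff_map_eq_one _).mpr fun g hg => ?_
    have hfix : ∀ v ∈ t₀, (g : Perm α) v = v := fun v hv =>
      congrArg Subtype.val (Perm.ext_iff.mp hg ⟨v, hv⟩)
    exact Subtype.ext (Subtype.ext
      (eq_one_of_forall_mem_face_apply_eq hcard hedge hcover hconn (g : G).2 hfix))
  calc Nat.card (stabilizer G t₀)
      = Nat.card (stabilizer G (t₀ : Set α)) := by rw [stabilizer_coe_finset]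
    _ ≤ Nat.card (Perm (t₀ : Set α)) := Nat.card_le_card_of_injective _ hrestrict
    _ = 6 := by rw [Nat.card_perm, Nat.card_coe_set_eq, Set.ncard_coe_finset, hcard t₀ ht₀]; rfl

lemma card_orbit_face_le {t₀ : Finset α} (ht₀ : t₀ ∈ F) :
    (orbit (stabilizer (Perm α) F) t₀).ncard ≤ F.card := by
  rw [← Set.ncard_coe_finset F]
  refine Set.ncard_le_ncard ?_ F.finite_toSet
  rintro _ ⟨g, rfl⟩
  exact (mem_stabilizer_iff.mp g.2).subset (Finset.smul_mem_smul_finset ht₀)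

theorem card_stabilizer_le (hne : F.Nonempty)
    (hcard : ∀ t ∈ F, t.card = 3)
    (hedge : ∀ e : Finset α, e.card = 2 → (F.filter (e ⊆ ·)).card ≤ 2)
    (hcover : ∀ v : α, ∃ t ∈ F, v ∈ t)
    (hconn : ∀ t ∈ F, ∀ t' ∈ F, Relation.ReflTransGen (FaceAdjacent F) t t') :
    Nat.card (stabilizer (Perm α) F) ≤ 6 * F.card := by
  obtain ⟨t₀, ht₀⟩ := hne
  rw [← Subgroup.card_mul_index (stabilizer (stabilizer (Perm α) F) t₀), index_stabilizer]
  exact Nat.mul_le_mul (card_stabilizer_face_le hcard hedge hcover ht₀ (hconn t₀ ht₀))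
    (card_orbit_face_le ht₀)

end

/-- **Lemma (automorphism bound).**
If `X` is a connected triangulated closed surface with `f` faces, then the group of
simplicial automorphisms of `X` (bijections of the vertex set mapping faces
bijectively onto faces) has order at most `6f`. -/
theorem card_aut_le (w f : ℕ) (F : Finset (Finset (Fin w)))
    (hF : IsClosedSurface F) (hf : F.card = f) :
    Nat.card {σ : Equiv.Perm (Fin w) // F.image (fun t => t.image σ) = F} ≤ 6 * f := by
  obtain ⟨hne, hcard, hedge, hcover, -, hconn⟩ := hF
  have hedge_le : ∀ e : Finset (Fin w), e.card = 2 → (F.filter (e ⊆ ·)).card ≤ 2 := by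
    intro e he
    by_cases hface : ∃ t ∈ F, e ⊆ t
    · exact (hedge e he hface).le
    · rw [Finset.filter_false_of_mem fun t ht het => hface ⟨t, ht, het⟩, Finset.card_empty]
      omega
  -- the automorphisms are, definitionally, the stabilizer of `F` under the pointwise action
  exact hf ▸ card_stabilizer_le hne hcard hedge_le hcover hconn
end

section
/- In a 2-dimensional simplicial complex on n vertices, every inclusion-minimal Z/2 2-cycle has at most n²/2 faces. -/
/-!
The boundary map `∂ : (Z/2)^Z → (Z/2)^{edges}` sends a chain to the parities of its edge degrees,
so a chain lies in its kernel exactly when its support is a 2-cycle. For a minimal cycle `Z` the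
only such supports are `∅` and `Z`, so the kernel of `∂` has dimension at most one, and
rank–nullity gives `#Z ≤ (n choose 2) + 1 ≤ n² / 2`.
-/

open Finset

lemma ZMod.sum_two_eq_card_filter_ne_zero {ι : Type*} (s : Finset ι) (x : ι → ZMod 2) :
    ∑ i ∈ s, x i = #{i ∈ s | x i ≠ 0} := by
  rw [natCast_card_filter]
  refine sum_congr rfl fun i _ => ?_
  generalize x i = a
  revert a
  decide

namespace TwoChain

variable {V : Type} (Z : Finset (Finset V))

def boundary [DecidableEq V] :
    (Z → ZMod 2) →ₗ[ZMod 2] ({e : Finset V // e.card = 2} → ZMod 2) where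
  toFun x e := ∑ t with e.1 ⊆ t.1, x t
  map_add' x y := by ext e; simp [sum_add_distrib]
  map_smul' c x := by ext e; simp [mul_sum]

variable {Z}

def support (x : Z → ZMod 2) : Finset (Finset V) :=
  ({t | x t ≠ 0} : Finset Z).map (Function.Embedding.subtype _)

lemma support_subset (x : Z → ZMod 2) : support x ⊆ Z := by
  intro t ht
  obtain ⟨t, -, rfl⟩ := mem_map.mp ht
  exact t.2

lemma mem_support {x : Z → ZMod 2} {t : Z} : t.1 ∈ support x ↔ x t ≠ 0 := by
  simp [support]

lemma boundary_apply [DecidableEq V] (x : Z → ZMod 2) (e : {e : Finset V // e.card = 2}) :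
    boundary Z x e = #{t ∈ support x | e.1 ⊆ t} := by
  simp only [boundary, LinearMap.coe_mk, AddHom.coe_mk, ZMod.sum_two_eq_card_filter_ne_zero,
    support, filter_map, card_map, filter_filter]
  simp only [Function.comp_apply, Function.Embedding.coe_subtype, and_comm]

lemma isTwoCycle_support [DecidableEq V] (hZ : ∀ t ∈ Z, t.card = 3) {x : Z → ZMod 2}
    (hx : x ∈ LinearMap.ker (boundary Z)) : IsTwoCycle (support x) := by
  refine ⟨fun t ht => hZ t (support_subset x ht), fun e he => ?_⟩
  rw [← ZMod.natCast_eq_zero_iff_even, ← boundary_apply x ⟨e, he⟩, LinearMap.mem_ker.mp hx]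
  rfl

lemma eq_zero_of_support_eq_empty {x : Z → ZMod 2} (hx : support x = ∅) : x = 0 := by
  ext t
  by_contra h
  simpa [hx] using mem_support.mpr h

lemma eq_one_of_support_eq {x : Z → ZMod 2} (hx : support x = Z) : x = 1 := by
  ext t
  have h : x t ≠ 0 := mem_support.mp (hx.symm ▸ t.2)
  rw [Pi.one_apply]
  generalize x t = a at h
  revert a
  decide

end TwoChain

open TwoChain

namespace IsMinCycle

variable {V : Type} [DecidableEq V] {Z : Finset (Finset V)}

lemma three_le_card [Fintype V] (hZ : IsMinCycle Z) : 3 ≤ Fintype.card V := by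
  obtain ⟨⟨hcard, -⟩, ⟨t, ht⟩, -⟩ := hZ
  exact hcard t ht ▸ card_le_univ t

lemma ker_boundary_le_span_one (hZ : IsMinCycle Z) :
    LinearMap.ker (boundary Z) ≤ Submodule.span (ZMod 2) {1} := by
  obtain ⟨⟨hcard, -⟩, -, hmin⟩ := hZ
  intro x hx
  obtain hempty | hne := (support x).eq_empty_or_nonempty
  · simp [eq_zero_of_support_eq_empty hempty]
  have hsupp : support x = Z := by
    by_contra hneq
    exact hmin _ ((support_subset x).ssubset_of_ne hneq) hne (isTwoCycle_support hcard hx)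
  simp [eq_one_of_support_eq hsupp]

lemma card_le_choose_two_add_one [Fintype V] (hZ : IsMinCycle Z) :
    #Z ≤ (Fintype.card V).choose 2 + 1 := by
  have hker : Module.finrank (ZMod 2) (LinearMap.ker (boundary Z)) ≤ 1 :=
    (Submodule.finrank_mono hZ.ker_boundary_le_span_one).trans
      (by simpa using finrank_span_le_card ({1} : Set (Z → ZMod 2)))
  have hrange := (LinearMap.range (boundary Z)).finrank_le
  have hrank := LinearMap.finrank_range_add_finrank_ker (boundary Z)
  simp only [Module.finrank_fintype_fun_eq_card, Fintype.card_coe, Fintype.card_finset_len]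
    at hrange hrank
  omega

end IsMinCycle

theorem minCycle_card_le_general (n : ℕ) (Z : Finset (Finset (Fin n)))
    (hZ : IsMinCycle Z) : (Z.card : ℝ) ≤ (n : ℝ) ^ 2 / 2 := by
  have hn : (3 : ℝ) ≤ n := by exact_mod_cast Fintype.card_fin n ▸ hZ.three_le_card
  have hcard : (Z.card : ℝ) ≤ (n.choose 2 : ℕ) + 1 := by
    exact_mod_cast Fintype.card_fin n ▸ hZ.card_le_choose_two_add_one
  rw [Nat.cast_choose_two] at hcard
  nlinarith

/-- **Lemma (minimal cycles are small).**
In a 2-dimensional simplicial complex on `n` vertices, every inclusion-minimal `Z/2`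
2-cycle has at most `n²/2` faces. -/
theorem minCycle_card_le (n : ℕ) (F : Finset (Finset (Fin n)))
    (hF : ∀ t ∈ F, t.card = 3) (Z : Finset (Finset (Fin n))) (hZF : Z ⊆ F)
    (hZ : IsMinCycle Z) : (Z.card : ℝ) ≤ (n : ℝ) ^ 2 / 2 :=
  minCycle_card_le_general n Z hZ
end

section
/- Let 0 < α < 1/2, let M ≥ 4 be a fixed integer, and let p = n^{α−1}. For Y drawn from Y(n,p), let T_Y(M) denote the number of barely-dense subcomplexes of Y on at most M vertices, i.e., the number of pairs (S, F′) where S ⊆ {1,…,n} with 4 ≤ |S| ≤ M and F′ is a set of exactly 2|S| − 4 faces of Y each of which is a subset of S. Then with high probability T_Y(M) < n^{2+α/2}. -/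
open scoped ENNReal

/-- The 3-element subsets of the vertex set `Fin n` (the possible faces). -/
abbrev Tri (n : ℕ) := {t : Finset (Fin n) // t.card = 3}

/-- The probability of the event `E` under the Linial–Meshulam measure `Y(n,p)`:
a complex is a configuration `ω : Tri n → Bool` recording which faces are present
(the vertex set is `Fin n` and all edges are present), each face independently
present with probability `p`; the probability of `E` is the sum over configurations
in `E` of `∏ (p if the face is present, else 1-p)`. -/
noncomputable def lmProb (n : ℕ) (p : ℝ≥0∞) (E : Set (Tri n → Bool)) : ℝ≥0∞ :=
  ∑' ω : E, ∏ t : Tri n, (if (ω : Tri n → Bool) t then p else 1 - p)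

/-- `y` is a filling of `τ` in the complex `ω`: a set of faces of `ω` such that a
2-element subset of the vertex set is contained in an odd number of members of `y`
exactly when it is a subset of `τ`. -/
def IsFilling (n : ℕ) (ω : Tri n → Bool) (τ : Finset (Fin n))
    (y : Finset (Finset (Fin n))) : Prop :=
  (∀ t ∈ y, ∃ h : t.card = 3, ω ⟨t, h⟩ = true) ∧
  ∀ e : Finset (Fin n), e.card = 2 →
    (Odd ((y.filter (fun t => e ⊆ t)).card) ↔ e ⊆ τ)

/-- `fill n ω τ` is the filling area of `τ` in `ω`: the minimum cardinality of a
filling of `τ`, as an extended natural number (`⊤` if no filling exists). -/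
noncomputable def fill (n : ℕ) (ω : Tri n → Bool) (τ : Finset (Fin n)) : ℕ∞ :=
  ⨅ y : {y : Finset (Finset (Fin n)) // IsFilling n ω τ y},
    ((y : Finset (Finset (Fin n))).card : ℕ∞)

/-- `TY n M ω` is the number of barely-dense subcomplexes of the complex `ω` on at
most `M` vertices: pairs `(S, F')` where `S` is a vertex set with `4 ≤ |S| ≤ M` and
`F'` is a set of exactly `2|S| - 4` faces of `ω`, each a subset of `S`. -/
noncomputable def TY (n M : ℕ) (ω : Tri n → Bool) : ℕ :=
  Nat.card {P : Finset (Fin n) × Finset (Finset (Fin n)) //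
    4 ≤ P.1.card ∧ P.1.card ≤ M ∧ P.2.card = 2 * P.1.card - 4 ∧
    ∀ t ∈ P.2, (∃ h : t.card = 3, ω ⟨t, h⟩ = true) ∧ t ⊆ P.1}

/-!
First-moment method. A fixed pair `(S, F')` with `|S| = s` is present with probability
`p ^ (2s - 4)`, and there are at most `C(n, s) · 2 ^ 2 ^ s` such pairs, so the expected value of
`T_Y(M)` is `O(n ^ s · p ^ (2s - 4))`, maximised at `s = 4` when `α ≤ 1/2`:
`E[T_Y(M)] = O(n ^ (4α))`.
Since `4α < 2 + α/2`, Markov's inequality bounds `P(T_Y(M) ≥ n ^ (2 + α/2))` by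
`O(n ^ (7α/2 - 2)) → 0`.
-/

open Finset Filter Topology

section BernoulliProduct

variable {ι : Type*} [Fintype ι] [DecidableEq ι]

noncomputable def bernoulliWeight (p : ℝ≥0∞) (ω : ι → Bool) : ℝ≥0∞ :=
  ∏ t, if ω t then p else 1 - p

theorem sum_bernoulliWeight_ite_forall_true {p : ℝ≥0∞} (hp : p ≤ 1) (G : Finset ι) :
    ∑ ω, (if ∀ t ∈ G, ω t = true then bernoulliWeight p ω else 0) = p ^ #G := by
  have factor : ∀ ω : ι → Bool, (if ∀ t ∈ G, ω t = true then bernoulliWeight p ω else 0) =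
      ∏ t, if ω t then p else if t ∈ G then 0 else 1 - p := by
    intro ω
    split_ifs with h
    · refine prod_congr rfl fun t _ => ?_
      by_cases ht : t ∈ G <;> simp [ht, h]
    · push Not at h
      obtain ⟨t, ht, hf⟩ := h
      exact (prod_eq_zero (mem_univ t) (by simp [ht, hf])).symm
  calc ∑ ω, (if ∀ t ∈ G, ω t = true then bernoulliWeight p ω else 0)
      = ∑ ω : ι → Bool, ∏ t, if ω t then p else if t ∈ G then 0 else 1 - p :=
        sum_congr rfl fun ω _ => factor ω
    _ = ∏ t, ∑ b : Bool, if b then p else if t ∈ G then 0 else 1 - p := by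
        rw [Fintype.prod_sum]
    _ = ∏ t, if t ∈ G then p else 1 := by
        refine prod_congr rfl fun t _ => ?_
        by_cases ht : t ∈ G <;> simp [ht, add_tsub_cancel_of_le hp]
    _ = p ^ #G := by rw [prod_ite_mem, univ_inter, prod_const]

theorem sum_bernoulliWeight {p : ℝ≥0∞} (hp : p ≤ 1) :
    ∑ ω : ι → Bool, bernoulliWeight p ω = 1 := by
  simpa using sum_bernoulliWeight_ite_forall_true hp ∅

end BernoulliProduct

section LinialMeshulam

variable {n : ℕ} {p : ℝ≥0∞}

theorem lmProb_eq_sum_indicator (E : Set (Tri n → Bool)) :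
    lmProb n p E = ∑ ω, E.indicator (bernoulliWeight p) ω := by
  rw [lmProb, ← tsum_fintype (L := SummationFilter.unconditional _)]
  exact tsum_subtype E (bernoulliWeight p)

theorem lmProb_add_lmProb_compl (hp : p ≤ 1) (E : Set (Tri n → Bool)) :
    lmProb n p E + lmProb n p Eᶜ = 1 := by
  simp_rw [lmProb_eq_sum_indicator, ← sum_add_distrib, Set.indicator_self_add_compl_apply]
  exact sum_bernoulliWeight hp

theorem lmProb_mul_le_sum_bernoulliWeight_mul {E : Set (Tri n → Bool)}
    {X : (Tri n → Bool) → ℝ≥0∞} {B : ℝ≥0∞} (hX : ∀ ω ∈ E, B ≤ X ω) :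
    lmProb n p E * B ≤ ∑ ω, bernoulliWeight p ω * X ω := by
  rw [lmProb_eq_sum_indicator, sum_mul]
  refine sum_le_sum fun ω _ => ?_
  by_cases hω : ω ∈ E
  · simpa [hω] using mul_le_mul_right (hX ω hω) _
  · simp [hω]

theorem sum_bernoulliWeight_ite_faces_present (hp : p ≤ 1) {F : Finset (Finset (Fin n))}
    (hF : ∀ t ∈ F, #t = 3) :
    ∑ ω : Tri n → Bool,
      (if ∀ t ∈ F, ∃ h : #t = 3, ω ⟨t, h⟩ = true then bernoulliWeight p ω else 0) = p ^ #F := by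
  have hcard : #(F.subtype (#· = 3)) = #F := by
    rw [card_subtype, filter_true_of_mem hF]
  rw [← hcard, ← sum_bernoulliWeight_ite_forall_true hp]
  refine sum_congr rfl fun ω _ => if_congr ?_ rfl rfl
  exact ⟨fun h t ht => h t (mem_subtype.1 ht) |>.2, fun h t ht =>
    ⟨hF t ht, h ⟨t, hF t ht⟩ (mem_subtype.2 ht)⟩⟩

end LinialMeshulam

theorem tendsto_lmProb_nhds_one {p : ℕ → ℝ≥0∞} {E : ∀ n, Set (Tri n → Bool)}
    (hp : ∀ᶠ n in atTop, p n ≤ 1)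
    (hE : Tendsto (fun n => lmProb n (p n) (E n)ᶜ) atTop (𝓝 0)) :
    Tendsto (fun n => lmProb n (p n) (E n)) atTop (𝓝 1) := by
  have hsub : ∀ᶠ n in atTop, 1 - lmProb n (p n) (E n)ᶜ = lmProb n (p n) (E n) := by
    filter_upwards [hp] with n hpn
    have hsum := lmProb_add_lmProb_compl hpn (E n)
    refine (ENNReal.eq_sub_of_add_eq ?_ hsum).symm
    exact ne_top_of_le_ne_top ENNReal.one_ne_top (hsum ▸ le_add_self)
  simpa using (ENNReal.Tendsto.sub tendsto_const_nhds hE (Or.inl ENNReal.one_ne_top)).congr' hsub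

section BarelyDense

variable {n : ℕ}

def barelyDenseShapes (n M : ℕ) : Finset (Finset (Fin n) × Finset (Finset (Fin n))) :=
  {P | 4 ≤ #P.1 ∧ #P.1 ≤ M ∧ #P.2 = 2 * #P.1 - 4 ∧ ∀ t ∈ P.2, #t = 3 ∧ t ⊆ P.1}

@[simp]
theorem mem_barelyDenseShapes {M : ℕ} {P : Finset (Fin n) × Finset (Finset (Fin n))} :
    P ∈ barelyDenseShapes n M ↔
      4 ≤ #P.1 ∧ #P.1 ≤ M ∧ #P.2 = 2 * #P.1 - 4 ∧ ∀ t ∈ P.2, #t = 3 ∧ t ⊆ P.1 := by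
  simp [barelyDenseShapes]

theorem TY_eq_card_filter (M : ℕ) (ω : Tri n → Bool) :
    TY n M ω = #{P ∈ barelyDenseShapes n M | ∀ t ∈ P.2, ∃ h : #t = 3, ω ⟨t, h⟩ = true} := by
  rw [TY, ← Nat.card_eq_finsetCard]
  refine Nat.card_congr (Equiv.subtypeEquivRight fun P => ?_)
  simp only [mem_filter, mem_barelyDenseShapes]
  grind

theorem sum_bernoulliWeight_mul_TY {p : ℝ≥0∞} (hp : p ≤ 1) (M : ℕ) :
    ∑ ω, bernoulliWeight p ω * TY n M ω
      = ∑ P ∈ barelyDenseShapes n M, p ^ (2 * #P.1 - 4) := by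
  simp_rw [TY_eq_card_filter, card_filter, Nat.cast_sum, mul_sum]
  rw [sum_comm]
  refine sum_congr rfl fun P hP => ?_
  obtain ⟨-, -, hcard, hfaces⟩ := mem_barelyDenseShapes.1 hP
  rw [← hcard, ← sum_bernoulliWeight_ite_faces_present hp fun t ht => (hfaces t ht).1]
  refine sum_congr rfl fun ω _ => ?_
  split_ifs <;> simp

theorem card_barelyDenseShapes_filter_card_le (M s : ℕ) :
    #{P ∈ barelyDenseShapes n M | #P.1 = s} ≤ n.choose s * 2 ^ 2 ^ s := by
  have hsub : {P ∈ barelyDenseShapes n M | #P.1 = s} ⊆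
      (powersetCard s univ).biUnion fun S => {S} ×ˢ S.powerset.powerset := by
    intro P hP
    simp only [mem_filter, mem_barelyDenseShapes] at hP
    simp only [mem_biUnion, mem_powersetCard, mem_product, mem_singleton, mem_powerset]
    exact ⟨P.1, ⟨subset_univ _, hP.2⟩, rfl, fun t ht => mem_powerset.2 (hP.1.2.2.2 t ht).2⟩
  have hfibre : ∀ S ∈ powersetCard s (univ : Finset (Fin n)),
      #({S} ×ˢ S.powerset.powerset) ≤ 2 ^ 2 ^ s := fun S hS => by
    rw [card_product, card_singleton, one_mul, card_powerset, card_powerset,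
      (mem_powersetCard.1 hS).2]
  calc _ ≤ _ := card_le_card hsub
    _ ≤ #(powersetCard s (univ : Finset (Fin n))) * 2 ^ 2 ^ s :=
        card_biUnion_le_card_mul _ _ _ hfibre
    _ = n.choose s * 2 ^ 2 ^ s := by rw [card_powersetCard, card_univ, Fintype.card_fin]

theorem sum_barelyDenseShapes_le (M : ℕ) (p : ℝ≥0∞) :
    ∑ P ∈ barelyDenseShapes n M, p ^ (2 * #P.1 - 4)
      ≤ ∑ s ∈ Icc 4 M, (n.choose s * 2 ^ 2 ^ s : ℝ≥0∞) * p ^ (2 * s - 4) := by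
  have hmaps : ∀ P ∈ barelyDenseShapes n M, #P.1 ∈ Icc 4 M := fun P hP =>
    mem_Icc.2 ⟨(mem_barelyDenseShapes.1 hP).1, (mem_barelyDenseShapes.1 hP).2.1⟩
  rw [← sum_fiberwise_of_maps_to hmaps]
  refine sum_le_sum fun s _ => ?_
  calc ∑ P ∈ barelyDenseShapes n M with #P.1 = s, p ^ (2 * #P.1 - 4)
      = #{P ∈ barelyDenseShapes n M | #P.1 = s} * p ^ (2 * s - 4) := by
        rw [sum_congr rfl fun P hP => by rw [(mem_filter.1 hP).2], sum_const, nsmul_eq_mul]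
    _ ≤ _ := by
        gcongr
        exact_mod_cast card_barelyDenseShapes_filter_card_le M s

end BarelyDense

section Asymptotics

variable {α : ℝ} {n : ℕ}

theorem choose_mul_rpow_pow_le (hα : α ≤ 1 / 2) (hn : 1 ≤ n) {s : ℕ} (hs : 4 ≤ s) :
    (n.choose s : ℝ≥0∞) * ((n : ℝ≥0∞) ^ (α - 1)) ^ (2 * s - 4) ≤ (n : ℝ≥0∞) ^ (4 * α) := by
  have hn1 : (1 : ℝ≥0∞) ≤ n := by exact_mod_cast hn
  have hn0 : (n : ℝ≥0∞) ≠ 0 := by positivity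
  -- each vertex beyond four contributes a factor `n · p² = n ^ (2α - 1) ≤ 1`
  have hexp : (s : ℝ) + (α - 1) * ((2 * s - 4 : ℕ) : ℝ) ≤ 4 * α := by
    have hs' : (4 : ℝ) ≤ s := by exact_mod_cast hs
    rw [Nat.cast_sub (by omega)]
    push_cast
    nlinarith
  calc (n.choose s : ℝ≥0∞) * ((n : ℝ≥0∞) ^ (α - 1)) ^ (2 * s - 4)
      ≤ (n : ℝ≥0∞) ^ (s : ℝ) * (n : ℝ≥0∞) ^ ((α - 1) * ((2 * s - 4 : ℕ) : ℝ)) := by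
        rw [ENNReal.rpow_natCast, ENNReal.rpow_mul, ENNReal.rpow_natCast]
        gcongr
        exact_mod_cast Nat.choose_le_pow n s
    _ = (n : ℝ≥0∞) ^ ((s : ℝ) + (α - 1) * ((2 * s - 4 : ℕ) : ℝ)) :=
        (ENNReal.rpow_add _ _ hn0 (ENNReal.natCast_ne_top n)).symm
    _ ≤ (n : ℝ≥0∞) ^ (4 * α) := ENNReal.rpow_le_rpow_of_exponent_le hn1 hexp

theorem sum_bernoulliWeight_mul_TY_le (hα : α < 1 / 2) (M : ℕ) (hn : 1 ≤ n) :
    ∑ ω, bernoulliWeight ((n : ℝ≥0∞) ^ (α - 1)) ω * TY n M ω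
      ≤ ((M + 1) * 2 ^ 2 ^ M : ℝ≥0∞) * (n : ℝ≥0∞) ^ (4 * α) := by
  have hn1 : (1 : ℝ≥0∞) ≤ n := by exact_mod_cast hn
  rw [sum_bernoulliWeight_mul_TY (ENNReal.rpow_le_one_of_one_le_of_neg hn1 (by linarith))]
  refine (sum_barelyDenseShapes_le M _).trans ?_
  have hterm : ∀ s ∈ Icc 4 M, (n.choose s * 2 ^ 2 ^ s : ℝ≥0∞) *
      ((n : ℝ≥0∞) ^ (α - 1)) ^ (2 * s - 4) ≤ 2 ^ 2 ^ M * (n : ℝ≥0∞) ^ (4 * α) := by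
    intro s hs
    obtain ⟨hs4, hsM⟩ := mem_Icc.1 hs
    calc _ = (2 ^ 2 ^ s : ℝ≥0∞) *
          ((n.choose s : ℝ≥0∞) * ((n : ℝ≥0∞) ^ (α - 1)) ^ (2 * s - 4)) := by ring
      _ ≤ 2 ^ 2 ^ M * (n : ℝ≥0∞) ^ (4 * α) :=
          mul_le_mul' (pow_le_pow_right₀ one_le_two (Nat.pow_le_pow_right two_pos hsM))
            (choose_mul_rpow_pow_le hα.le hn hs4)
  calc _ ≤ #(Icc 4 M) • (2 ^ 2 ^ M * (n : ℝ≥0∞) ^ (4 * α)) := sum_le_card_nsmul _ _ _ hterm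
    _ ≤ ((M + 1) * 2 ^ 2 ^ M : ℝ≥0∞) * (n : ℝ≥0∞) ^ (4 * α) := by
        rw [nsmul_eq_mul, ← mul_assoc]
        gcongr
        rw [Nat.card_Icc]
        exact_mod_cast Nat.sub_le _ _

theorem lmProb_rpow_le_TY_le (hα : α < 1 / 2) (M : ℕ) (hn : 1 ≤ n) (β : ℝ) :
    lmProb n ((n : ℝ≥0∞) ^ (α - 1)) {ω | (n : ℝ) ^ β ≤ TY n M ω}
      ≤ ((M + 1) * 2 ^ 2 ^ M : ℝ≥0∞) * (n : ℝ≥0∞) ^ (4 * α - β) := by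
  have hn0 : (n : ℝ≥0∞) ≠ 0 := by positivity
  have hnt : (n : ℝ≥0∞) ≠ ⊤ := ENNReal.natCast_ne_top n
  have hB0 : (n : ℝ≥0∞) ^ β ≠ 0 := (ENNReal.rpow_pos (pos_iff_ne_zero.2 hn0) hnt).ne'
  have hBt : (n : ℝ≥0∞) ^ β ≠ ⊤ := ENNReal.rpow_ne_top_of_ne_zero hn0 hnt
  rw [ENNReal.rpow_sub (4 * α) β hn0 hnt, ← mul_div_assoc,
    ENNReal.le_div_iff_mul_le (Or.inl hB0) (Or.inl hBt)]
  refine (lmProb_mul_le_sum_bernoulliWeight_mul fun ω hω => ?_).trans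
    (sum_bernoulliWeight_mul_TY_le hα M hn)
  rw [← ENNReal.ofReal_natCast n, ENNReal.ofReal_rpow_of_pos (by exact_mod_cast hn),
    ← ENNReal.ofReal_natCast]
  exact ENNReal.ofReal_le_ofReal hω

end Asymptotics

theorem ENNReal.tendsto_const_mul_natCast_rpow_of_neg {c : ℝ≥0∞} (hc : c ≠ ⊤) {y : ℝ}
    (hy : y < 0) : Tendsto (fun n : ℕ => c * (n : ℝ≥0∞) ^ y) atTop (𝓝 0) := by
  have h := ((ENNReal.continuous_rpow_const (y := y)).tendsto ⊤).comp
    ENNReal.tendsto_nat_nhds_top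
  simpa [ENNReal.top_rpow_of_neg hy] using ENNReal.Tendsto.const_mul h (Or.inr hc)

theorem barely_dense_whp_general (α : ℝ) (hα : α < 1 / 2)
    (M : ℕ) :
    Filter.Tendsto (fun n : ℕ =>
      lmProb n ((n : ℝ≥0∞) ^ (α - 1))
        {ω | (TY n M ω : ℝ) < (n : ℝ) ^ (2 + α / 2)})
      Filter.atTop (nhds 1) := by
  refine tendsto_lmProb_nhds_one ?_ ?_
  · filter_upwards [eventually_ge_atTop 1] with n hn
    exact ENNReal.rpow_le_one_of_one_le_of_neg (by exact_mod_cast hn) (by linarith)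
  have hK : ((M + 1) * 2 ^ 2 ^ M : ℝ≥0∞) ≠ ⊤ := by finiteness
  have hlim := ENNReal.tendsto_const_mul_natCast_rpow_of_neg hK
    (by linarith : 4 * α - (2 + α / 2) < 0)
  refine tendsto_of_tendsto_of_tendsto_of_le_of_le' tendsto_const_nhds hlim
    (Eventually.of_forall fun _ => zero_le) ?_
  filter_upwards [eventually_ge_atTop 1] with n hn
  simpa only [Set.compl_ofPred, not_lt] using lmProb_rpow_le_TY_le hα M hn (2 + α / 2)

/-- **Lemma (few barely-dense subcomplexes).**
Let `0 < α < 1/2`, `M ≥ 4` a fixed integer, and `p = n^(α-1)`. Then with high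
probability `T_Y(M) < n^(2+α/2)` for `Y ∼ Y(n,p)`. -/
theorem barely_dense_whp (α : ℝ) (hα0 : 0 < α) (hα : α < 1 / 2)
    (M : ℕ) (hM : 4 ≤ M) :
    Filter.Tendsto (fun n : ℕ =>
      lmProb n ((n : ℝ≥0∞) ^ (α - 1))
        {ω | (TY n M ω : ℝ) < (n : ℝ) ^ (2 + α / 2)})
      Filter.atTop (nhds 1) :=
  barely_dense_whp_general α hα M
end
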